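/- arXiv:2401.10398 — 9 statements merged into one kernel-verified Lean document; each statement's English description precedes it below -/
import Mathlib

section
/- Suppose a system has nonuniform μ-bounded growth with constants K̂ ≥ 1, a ≥ 0 and parameter ε ≥ 0, and admits a nonuniform μ-dichotomy with parameters (P; α, β, θ, ν). If P ≠ 0, then -(a + ε) ≤ α; if P ≠ Id, then β ≤ a + ε. -/
open Real Set Filter

noncomputable section

/-- A growth rate: strictly increasing, positive, `μ 0 = 1`, `μ → ∞` at `+∞`, `μ → 0` at `-∞`. -/
structure GrowthRate (μ : ℝ → ℝ) : Prop where
  pos : ∀ t, 0 < μ t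
  mono : StrictMono μ
  one : μ 0 = 1
  top : Filter.Tendsto μ Filter.atTop Filter.atTop
  bot : Filter.Tendsto μ Filter.atBot (nhds 0)

/-- Nonuniform μ-dichotomy with projector `P` and parameters `(K, α, β, θ, ν)`. -/
def IsNmuD {M : Type*} [NormedRing M] (μ : ℝ → ℝ) (Φ : ℝ → ℝ → M) (P : ℝ → M)
    (K α β θ ν : ℝ) : Prop :=
  1 ≤ K ∧ α < 0 ∧ 0 < β ∧ 0 ≤ θ ∧ 0 ≤ ν ∧ α + θ < 0 ∧ 0 < β - ν ∧
  (∀ t s : ℝ, s ≤ t →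
    ‖Φ t s * P s‖ ≤ K * (μ t / μ s) ^ α * (μ s) ^ (Real.sign s * θ)) ∧
  (∀ t s : ℝ, t ≤ s →
    ‖Φ t s * (1 - P s)‖ ≤ K * (μ t / μ s) ^ β * (μ s) ^ (Real.sign s * ν))

/-- Nonuniform μ-bounded growth with constants `Khat`, `a` and parameter `ep`. -/
def HasNmuGrowth {M : Type*} [NormedRing M] (μ : ℝ → ℝ) (Φ : ℝ → ℝ → M)
    (Khat a ep : ℝ) : Prop :=
  1 ≤ Khat ∧ 0 ≤ a ∧ ∀ t s : ℝ,
    ‖Φ t s‖ ≤ Khat * (μ t / μ s) ^ (Real.sign (t - s) * a) * μ s ^ (Real.sign s * ep)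

/-!
If `P s ≠ 0`, transport `P s` forward to time `t → ∞` and back again:
`P s = Ψ s t (Ψ t s P s)`, so the growth bound on `Ψ s t` and the dichotomy bound on
`Ψ t s P s` give `‖P s‖ ≤ C μ(t)^(a + α + ε)`. Were `α < -(a + ε)`, the right side would
tend to `0`. Symmetrically, transporting `1 - P s` to `t → -∞` gives
`‖1 - P s‖ ≤ C μ(t)^(β - a - ε)`, which tends to `0` if `β > a + ε`, since `μ → 0` at `-∞`.
-/

open Topology

section

variable {μ : ℝ → ℝ}

namespace GrowthRate

theorem tendsto_rpow_atTop (hμ : GrowthRate μ) {γ : ℝ} (hγ : γ < 0) :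
    Tendsto (fun t => μ t ^ γ) atTop (𝓝 0) := by
  have hneg := tendsto_rpow_neg_atTop (y := -γ) (neg_pos.mpr hγ)
  rw [neg_neg] at hneg
  exact hneg.comp hμ.top

theorem tendsto_rpow_atBot (hμ : GrowthRate μ) {γ : ℝ} (hγ : 0 < γ) :
    Tendsto (fun t => μ t ^ γ) atBot (𝓝 0) := by
  simpa [Real.zero_rpow hγ.ne'] using hμ.bot.rpow_const (Or.inr hγ.le)

end GrowthRate

theorem norm_le_norm_mul_norm_mul_of_mul_eq_one {R : Type*} [NormedRing R] {u v : R}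
    (huv : u * v = 1) (x : R) : ‖x‖ ≤ ‖u‖ * ‖v * x‖ :=
  calc ‖x‖ = ‖u * (v * x)‖ := by rw [← mul_assoc, huv, one_mul]
    _ ≤ ‖u‖ * ‖v * x‖ := norm_mul_le _ _

variable {M : Type*} [NormedRing M] {Ψ : ℝ → ℝ → M} {Khat a ep : ℝ}

namespace HasNmuGrowth

theorem norm_le_of_lt_of_pos (hg : HasNmuGrowth μ Ψ Khat a ep) (hμ : ∀ t, 0 < μ t)
    {s t : ℝ} (hst : s < t) (ht : 0 < t) :
    ‖Ψ s t‖ ≤ Khat * (μ t / μ s) ^ a * μ t ^ ep := by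
  have hbound := hg.2.2 s t
  rwa [Real.sign_of_neg (sub_neg.mpr hst), Real.sign_of_pos ht, neg_one_mul, one_mul,
    Real.rpow_neg (div_pos (hμ s) (hμ t)).le, ← Real.inv_rpow (div_pos (hμ s) (hμ t)).le,
    inv_div] at hbound

theorem norm_le_of_lt_of_neg (hg : HasNmuGrowth μ Ψ Khat a ep)
    {s t : ℝ} (hts : t < s) (ht : t < 0) :
    ‖Ψ s t‖ ≤ Khat * (μ s / μ t) ^ a * μ t ^ (-ep) := by
  have hbound := hg.2.2 s t
  rwa [Real.sign_of_pos (sub_pos.mpr hts), Real.sign_of_neg ht, one_mul, neg_one_mul]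
    at hbound

end HasNmuGrowth

namespace IsNmuD

variable {P : ℝ → M} {K α β θ ν : ℝ}

theorem proj_eq_zero_of_lt_neg_add (h : IsNmuD μ Ψ P K α β θ ν) (hμ : GrowthRate μ)
    (hinv : ∀ t s, Ψ s t * Ψ t s = 1) (hg : HasNmuGrowth μ Ψ Khat a ep)
    (hα : α < -(a + ep)) (s : ℝ) : P s = 0 := by
  obtain ⟨-, -, -, -, -, -, -, hstable, -⟩ := h
  have hμs := hμ.pos s
  set C := Khat * K * (μ s ^ (Real.sign s * θ) / μ s ^ (a + α)) with hC
  have hbound : ∀ᶠ t in atTop, ‖P s‖ ≤ C * μ t ^ (a + α + ep) := by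
    filter_upwards [eventually_gt_atTop s, eventually_gt_atTop 0] with t hst ht
    have hμt := hμ.pos t
    have hgrowth := hg.norm_le_of_lt_of_pos hμ.pos hst ht
    calc ‖P s‖ ≤ ‖Ψ s t‖ * ‖Ψ t s * P s‖ :=
          norm_le_norm_mul_norm_mul_of_mul_eq_one (hinv t s) _
      _ ≤ (Khat * (μ t / μ s) ^ a * μ t ^ ep) *
            (K * (μ t / μ s) ^ α * μ s ^ (Real.sign s * θ)) :=
          mul_le_mul hgrowth (hstable t s hst.le) (norm_nonneg _)
            ((norm_nonneg _).trans hgrowth)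
      _ = C * μ t ^ (a + α + ep) := by
          rw [hC, Real.div_rpow hμt.le hμs.le, Real.div_rpow hμt.le hμs.le,
            Real.rpow_add hμt, Real.rpow_add hμt, Real.rpow_add hμs]
          field_simp
  have hlim := ge_of_tendsto ((hμ.tendsto_rpow_atTop (by linarith)).const_mul C) hbound
  rw [mul_zero] at hlim
  exact norm_le_zero_iff.mp hlim

theorem proj_eq_one_of_add_lt (h : IsNmuD μ Ψ P K α β θ ν) (hμ : GrowthRate μ)
    (hinv : ∀ t s, Ψ s t * Ψ t s = 1) (hg : HasNmuGrowth μ Ψ Khat a ep)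
    (hβ : a + ep < β) (s : ℝ) : P s = 1 := by
  obtain ⟨-, -, -, -, -, -, -, -, hunstable⟩ := h
  have hμs := hμ.pos s
  set C := Khat * K * (μ s ^ (Real.sign s * ν) * μ s ^ a / μ s ^ β) with hC
  have hbound : ∀ᶠ t in atBot, ‖1 - P s‖ ≤ C * μ t ^ (β - a - ep) := by
    filter_upwards [eventually_lt_atBot s, eventually_lt_atBot 0] with t hts ht
    have hμt := hμ.pos t
    have hgrowth := hg.norm_le_of_lt_of_neg hts ht
    calc ‖1 - P s‖ ≤ ‖Ψ s t‖ * ‖Ψ t s * (1 - P s)‖ :=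
          norm_le_norm_mul_norm_mul_of_mul_eq_one (hinv t s) _
      _ ≤ (Khat * (μ s / μ t) ^ a * μ t ^ (-ep)) *
            (K * (μ t / μ s) ^ β * μ s ^ (Real.sign s * ν)) :=
          mul_le_mul hgrowth (hunstable t s hts.le) (norm_nonneg _)
            ((norm_nonneg _).trans hgrowth)
      _ = C * μ t ^ (β - a - ep) := by
          rw [hC, Real.div_rpow hμs.le hμt.le, Real.div_rpow hμt.le hμs.le, sub_eq_add_neg,
            sub_eq_add_neg, Real.rpow_add hμt, Real.rpow_add hμt, Real.rpow_neg hμt.le a,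
            Real.rpow_neg hμt.le ep]
          field_simp
  have hlim := ge_of_tendsto ((hμ.tendsto_rpow_atBot (by linarith)).const_mul C) hbound
  rw [mul_zero] at hlim
  exact (sub_eq_zero.mp (norm_le_zero_iff.mp hlim)).symm

end IsNmuD

end

theorem stmt2_general {M : Type*} [NormedRing M] (μ : ℝ → ℝ)
    (hμ : GrowthRate μ) (Ψ : ℝ → ℝ → M) (P : ℝ → M)
    (hinv : ∀ t s : ℝ, Ψ s t * Ψ t s = 1)
    (Khat a ep : ℝ)
    (hg : HasNmuGrowth μ Ψ Khat a ep)
    (K α β θ ν : ℝ) (h : IsNmuD μ Ψ P K α β θ ν) :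
    ((∃ s : ℝ, P s ≠ 0) → -(a + ep) ≤ α) ∧
    ((∃ s : ℝ, P s ≠ 1) → β ≤ a + ep) :=
  ⟨fun ⟨s, hs⟩ => le_of_not_gt fun hα => hs (h.proj_eq_zero_of_lt_neg_add hμ hinv hg hα s),
    fun ⟨s, hs⟩ => le_of_not_gt fun hβ => hs (h.proj_eq_one_of_add_lt hμ hinv hg hβ s)⟩

/-- growth constants bound the dichotomy exponents. -/
theorem stmt2 {M : Type*} [NormedRing M] [NormOneClass M] (μ : ℝ → ℝ)
    (hμ : GrowthRate μ) (Ψ : ℝ → ℝ → M) (P : ℝ → M)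
    (hinv : ∀ t s : ℝ, Ψ s t * Ψ t s = 1)
    (Khat a ep : ℝ) (hep : 0 ≤ ep)
    (hg : HasNmuGrowth μ Ψ Khat a ep)
    (K α β θ ν : ℝ) (h : IsNmuD μ Ψ P K α β θ ν) :
    ((∃ s : ℝ, P s ≠ 0) → -(a + ep) ≤ α) ∧
    ((∃ s : ℝ, P s ≠ 1) → β ≤ a + ep) :=
  stmt2_general μ hμ Ψ P hinv Khat a ep hg K α β θ ν h
end
end

section
/- On every spectral gap, the function of optimal stable ratio 𝔰𝔱_P: γ ↦ inf{α + θ : (α, θ) ∈ St_P^γ} is continuous. -/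
open Real Set Filter

noncomputable section

/-- Invariant projector for an evolution operator. -/
def IsInvProj {M : Type*} [Ring M] (Φ : ℝ → ℝ → M) (P : ℝ → M) : Prop :=
  (∀ s, P s * P s = P s) ∧ ∀ t s : ℝ, P t * Φ t s = Φ t s * P s

/-- The γ-shifted evolution operator `Φ_γ(t,s) = (μ t / μ s)^(-γ) • Φ(t,s)`. -/
def shiftOp {M : Type*} [Ring M] [Algebra ℝ M] (μ : ℝ → ℝ) (Φ : ℝ → ℝ → M)
    (γ : ℝ) : ℝ → ℝ → M :=
  fun t s => ((μ t / μ s) ^ (-γ) : ℝ) • Φ t s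

/-- Region of stable constants of the γ-shifted system. -/
def StSet {M : Type*} [NormedRing M] [NormedAlgebra ℝ M] (μ : ℝ → ℝ) (Φ : ℝ → ℝ → M)
    (P : ℝ → M) (γ : ℝ) : Set (ℝ × ℝ) :=
  {p | ∃ K β ν, IsNmuD μ (shiftOp μ Φ γ) P K p.1 β p.2 ν}

/-- Region of unstable constants of the γ-shifted system. -/
def UnSet {M : Type*} [NormedRing M] [NormedAlgebra ℝ M] (μ : ℝ → ℝ) (Φ : ℝ → ℝ → M)
    (P : ℝ → M) (γ : ℝ) : Set (ℝ × ℝ) :=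
  {p | ∃ K α θ, IsNmuD μ (shiftOp μ Φ γ) P K α p.1 θ p.2}

/-- Optimal stable ratio `𝔰𝔱_P^γ = inf {α + θ : (α, θ) ∈ St_P^γ}`. -/
def stRatio {M : Type*} [NormedRing M] [NormedAlgebra ℝ M] (μ : ℝ → ℝ) (Φ : ℝ → ℝ → M)
    (P : ℝ → M) (γ : ℝ) : ℝ :=
  sInf ((fun p : ℝ × ℝ => p.1 + p.2) '' StSet μ Φ P γ)

/-- Optimal unstable ratio `𝔲𝔫_P^γ = sup {β - ν : (β, ν) ∈ Un_P^γ}`. -/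
def unRatio {M : Type*} [NormedRing M] [NormedAlgebra ℝ M] (μ : ℝ → ℝ) (Φ : ℝ → ℝ → M)
    (P : ℝ → M) (γ : ℝ) : ℝ :=
  sSup ((fun p : ℝ × ℝ => p.1 - p.2) '' UnSet μ Φ P γ)

/-- The nonuniform μ-dichotomy resolvent set. -/
def NmuResolvent {M : Type*} [NormedRing M] [NormedAlgebra ℝ M] (μ : ℝ → ℝ)
    (Φ : ℝ → ℝ → M) : Set ℝ :=
  {γ | ∃ P K α β θ ν, IsInvProj Φ P ∧ IsNmuD μ (shiftOp μ Φ γ) P K α β θ ν}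

/-- Nonuniform (μ, ε)-kinematic similarity via the Lyapunov pair `S`, `Sinv`. -/
def KinSim {M : Type*} [NormedRing M] (μ : ℝ → ℝ) (Φ Ψ : ℝ → ℝ → M)
    (S Sinv : ℝ → M) (ε Mc : ℝ) : Prop :=
  0 < Mc ∧ (∀ t, S t * Sinv t = 1) ∧ (∀ t, Sinv t * S t = 1) ∧
  (∀ t, ‖S t‖ ≤ Mc * μ t ^ (Real.sign t * ε)) ∧
  (∀ t, ‖Sinv t‖ ≤ Mc * μ t ^ (Real.sign t * ε)) ∧
  (∀ t s : ℝ, Φ t s * S s = S t * Ψ t s)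

/-- The global optimal ratio function. -/
def Gor {M : Type*} [NormedRing M] [NormedAlgebra ℝ M] (μ : ℝ → ℝ)
    (Φ : ℝ → ℝ → M) (γ : ℝ) : ℝ :=
  sSup {x | ∃ P K α β θ ν, IsInvProj Φ P ∧ IsNmuD μ (shiftOp μ Φ γ) P K α β θ ν ∧
    x = min (-(α + θ)) (β - ν)}

/-- Translation of stable pairs between shifted systems. -/
lemma stset_transfer {M : Type*} [NormedRing M] [NormedAlgebra ℝ M]
    (μ : ℝ → ℝ) (hμ : GrowthRate μ) (Φ : ℝ → ℝ → M) (P : ℝ → M)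
    {γ ζ α θ : ℝ} (h : (α, θ) ∈ StSet μ Φ P ζ)
    (hsum : α + θ + (ζ - γ) < 0)
    (hne : (StSet μ Φ P γ).Nonempty) :
    (α + (ζ - γ), θ) ∈ StSet μ Φ P γ := by
  obtain ⟨K, β, ν, hK, hα, hβ, hθ, hν, hαθ, hβν, hst, hun⟩ := h
  obtain ⟨q, K₂, β₂, ν₂, hK₂, hα₂, hβ₂, hθ₂, hν₂, hαθ₂, hβν₂, hst₂, hun₂⟩ := hne
  have hθ' : (0:ℝ) ≤ θ := hθ
  refine ⟨max K K₂, β₂, ν₂, le_trans hK (le_max_left _ _),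
    (show α + (ζ - γ) < 0 by linarith), hβ₂, hθ, hν₂,
    (show α + (ζ - γ) + θ < 0 by linarith), hβν₂, ?_, ?_⟩
  · intro t s hts
    have hx : (0:ℝ) < μ t / μ s := div_pos (hμ.pos t) (hμ.pos s)
    have hμs : (0:ℝ) < μ s := hμ.pos s
    have key : shiftOp μ Φ γ t s * P s
        = ((μ t / μ s) ^ (ζ - γ) : ℝ) • (shiftOp μ Φ ζ t s * P s) := by
      simp only [shiftOp, smul_mul_assoc, smul_smul]
      congr 1
      rw [← Real.rpow_add hx]
      ring_nf
    rw [key, norm_smul, Real.norm_eq_abs, abs_of_pos (Real.rpow_pos_of_pos hx _)]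
    calc (μ t / μ s) ^ (ζ - γ) * ‖shiftOp μ Φ ζ t s * P s‖
        ≤ (μ t / μ s) ^ (ζ - γ) * (K * (μ t / μ s) ^ α * μ s ^ (Real.sign s * θ)) := by
          exact mul_le_mul_of_nonneg_left (hst t s hts) (Real.rpow_pos_of_pos hx _).le
      _ = K * (μ t / μ s) ^ (α + (ζ - γ)) * μ s ^ (Real.sign s * θ) := by
          rw [Real.rpow_add hx]; ring
      _ ≤ max K K₂ * (μ t / μ s) ^ (α + (ζ - γ)) * μ s ^ (Real.sign s * θ) := by
          have h1 : (0:ℝ) ≤ (μ t / μ s) ^ (α + (ζ - γ)) := (Real.rpow_pos_of_pos hx _).le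
          have h2 : (0:ℝ) ≤ μ s ^ (Real.sign s * θ) := (Real.rpow_pos_of_pos hμs _).le
          have := le_max_left K K₂
          gcongr
  · intro t s hts
    calc ‖shiftOp μ Φ γ t s * (1 - P s)‖
        ≤ K₂ * (μ t / μ s) ^ β₂ * μ s ^ (Real.sign s * ν₂) := hun₂ t s hts
      _ ≤ max K K₂ * (μ t / μ s) ^ β₂ * μ s ^ (Real.sign s * ν₂) := by
          have hx : (0:ℝ) < μ t / μ s := div_pos (hμ.pos t) (hμ.pos s)
          have h1 : (0:ℝ) ≤ (μ t / μ s) ^ β₂ := (Real.rpow_pos_of_pos hx _).le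
          have h2 : (0:ℝ) ≤ μ s ^ (Real.sign s * ν₂) := (Real.rpow_pos_of_pos (hμ.pos s) _).le
          have := le_max_right K K₂
          gcongr

/-- The set of sums of stable pairs. -/
def stSums {M : Type*} [NormedRing M] [NormedAlgebra ℝ M] (μ : ℝ → ℝ) (Φ : ℝ → ℝ → M)
    (P : ℝ → M) (γ : ℝ) : Set ℝ :=
  (fun p : ℝ × ℝ => p.1 + p.2) '' StSet μ Φ P γ

lemma stSums_neg {M : Type*} [NormedRing M] [NormedAlgebra ℝ M] {μ : ℝ → ℝ} {Φ : ℝ → ℝ → M}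
    {P : ℝ → M} {γ : ℝ} {x : ℝ} (hx : x ∈ stSums μ Φ P γ) : x < 0 := by
  obtain ⟨⟨α, θ⟩, ⟨K, β, ν, hd⟩, rfl⟩ := hx
  exact hd.2.2.2.2.2.1

lemma stSums_bdd_transfer {M : Type*} [NormedRing M] [NormedAlgebra ℝ M]
    (μ : ℝ → ℝ) (hμ : GrowthRate μ) (Φ : ℝ → ℝ → M) (P : ℝ → M) {γ ζ : ℝ}
    (hneζ : (StSet μ Φ P ζ).Nonempty)
    (hbdd : BddBelow (stSums μ Φ P ζ)) : BddBelow (stSums μ Φ P γ) := by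
  obtain ⟨L, hL⟩ := hbdd
  refine ⟨min L 0 - |γ - ζ|, ?_⟩
  rintro x ⟨⟨α, θ⟩, hmem, rfl⟩
  by_cases hc : α + θ + (γ - ζ) < 0
  · have h2 := stset_transfer μ hμ Φ P hmem hc hneζ
    have h3 : (α + (γ - ζ)) + θ ∈ stSums μ Φ P ζ := ⟨_, h2, rfl⟩
    have h4 := hL h3
    have h5 : γ - ζ ≤ |γ - ζ| := le_abs_self _
    have : min L 0 ≤ L := min_le_left _ _
    simp only at h4 ⊢
    linarith
  · push_neg at hc
    have h5 : γ - ζ ≤ |γ - ζ| := le_abs_self _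
    have : min L 0 ≤ 0 := min_le_right _ _
    simp only at *
    linarith

lemma stRatio_le_aux {M : Type*} [NormedRing M] [NormedAlgebra ℝ M]
    (μ : ℝ → ℝ) (hμ : GrowthRate μ) (Φ : ℝ → ℝ → M) (P : ℝ → M) {γ ζ : ℝ}
    (hneγ : (StSet μ Φ P γ).Nonempty) (hneζ : (StSet μ Φ P ζ).Nonempty)
    (hbddγ : BddBelow (stSums μ Φ P γ)) :
    stRatio μ Φ P γ ≤ stRatio μ Φ P ζ + |ζ - γ| := by
  have hRγ_le_zero : stRatio μ Φ P γ ≤ 0 := by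
    obtain ⟨p, hp⟩ := hneγ
    have hmem : p.1 + p.2 ∈ stSums μ Φ P γ := ⟨p, hp, rfl⟩
    have h1 : stRatio μ Φ P γ ≤ p.1 + p.2 := csInf_le hbddγ hmem
    have h2 : p.1 + p.2 < 0 := stSums_neg hmem
    linarith
  have key : stRatio μ Φ P γ - |ζ - γ| ≤ sInf (stSums μ Φ P ζ) := by
    refine le_csInf (hneζ.image _) ?_
    rintro x ⟨⟨α, θ⟩, hmem, rfl⟩
    by_cases hc : α + θ + (ζ - γ) < 0
    · have h2 := stset_transfer μ hμ Φ P hmem hc hneγ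
      have h3 : (α + (ζ - γ)) + θ ∈ stSums μ Φ P γ := ⟨_, h2, rfl⟩
      have h4 := csInf_le hbddγ h3
      have h5 : ζ - γ ≤ |ζ - γ| := le_abs_self _
      simp only at *
      unfold stRatio
      unfold stSums at h4
      linarith
    · push_neg at hc
      have h5 : ζ - γ ≤ |ζ - γ| := le_abs_self _
      simp only at *
      linarith
  have : stRatio μ Φ P ζ = sInf (stSums μ Φ P ζ) := rfl
  linarith [key]

/-- on every spectral gap the optimal stable ratio map is continuous. -/
theorem stmt5 {M : Type*} [NormedRing M] [NormedAlgebra ℝ M] [NormOneClass M]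
    (μ : ℝ → ℝ) (hμ : GrowthRate μ) (Φ : ℝ → ℝ → M) (P : ℝ → M)
    (Khat c ep : ℝ) (hep : 0 ≤ ep) (hg : HasNmuGrowth μ Φ Khat c ep)
    (hP : ∃ s : ℝ, P s ≠ 0)
    (b a : ℝ) (hba : b < a)
    (hgap : ∀ γ ∈ Set.Ioo b a, (StSet μ Φ P γ).Nonempty) :
    ContinuousOn (stRatio μ Φ P) (Set.Ioo b a) := by
  by_cases hB : ∃ γ ∈ Set.Ioo b a, BddBelow (stSums μ Φ P γ)
  · obtain ⟨γ₀, hγ₀, hbdd₀⟩ := hB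
    have hbdd : ∀ γ ∈ Set.Ioo b a, BddBelow (stSums μ Φ P γ) := fun γ _ =>
      stSums_bdd_transfer μ hμ Φ P (hgap γ₀ hγ₀) hbdd₀
    have hlip : LipschitzOnWith 1 (stRatio μ Φ P) (Set.Ioo b a) := by
      rw [lipschitzOnWith_iff_dist_le_mul]
      intro x hx y hy
      rw [Real.dist_eq, Real.dist_eq]
      have h1 := stRatio_le_aux μ hμ Φ P (hgap x hx) (hgap y hy) (hbdd x hx)
      have h2 := stRatio_le_aux μ hμ Φ P (hgap y hy) (hgap x hx) (hbdd y hy)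
      rw [abs_sub_comm y x] at h1
      have h3 : |stRatio μ Φ P x - stRatio μ Φ P y| ≤ |x - y| :=
        abs_sub_le_iff.mpr ⟨by linarith, by linarith⟩
      simpa using h3
    exact hlip.continuousOn
  · push_neg at hB
    have hzero : ∀ γ ∈ Set.Ioo b a, stRatio μ Φ P γ = 0 := by
      intro γ hγ
      exact Real.sInf_of_not_bddBelow (hB γ hγ)
    exact (continuousOn_const (c := (0:ℝ))).congr hzero
end
end

section
/- If the system ẏ = A(t)y has (Nμ, ε)-growth, then for every bounded spectral gap (b_i, a_{i+1}) of the nonuniform μ-dichotomy spectrum, the optimal stable ratio satisfies lim_{γ → b_i^+} 𝔰𝔱_P^γ = 0, and the optimal unstable ratio satisfies lim_{γ → a_{i+1}^-} 𝔲𝔫_P^γ = 0. -/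
open Real Set Filter

noncomputable section

lemma shift_est {M : Type*} [NormedRing M] [NormedAlgebra ℝ M]
    (μ : ℝ → ℝ) (hμ : GrowthRate μ) (Φ : ℝ → ℝ → M) (γ γ' t s : ℝ) (x : M) :
    ‖shiftOp μ Φ γ' t s * x‖ = (μ t / μ s) ^ (γ - γ') * ‖shiftOp μ Φ γ t s * x‖ := by
  have hq : 0 < μ t / μ s := div_pos (hμ.pos t) (hμ.pos s)
  have he : (-γ' : ℝ) = (γ - γ') + (-γ) := by ring
  simp only [shiftOp]
  rw [he, Real.rpow_add hq, mul_smul, smul_mul_assoc, smul_mul_assoc,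
    norm_smul, Real.norm_eq_abs, abs_of_pos (Real.rpow_pos_of_pos hq _)]

lemma shift_nmud {M : Type*} [NormedRing M] [NormedAlgebra ℝ M]
    (μ : ℝ → ℝ) (hμ : GrowthRate μ) (Φ : ℝ → ℝ → M) (P : ℝ → M)
    (γ γ' K α β θ ν : ℝ) (h : IsNmuD μ (shiftOp μ Φ γ) P K α β θ ν)
    (h1 : α + (γ - γ') + θ < 0) (h2 : 0 < β + (γ - γ') - ν) :
    IsNmuD μ (shiftOp μ Φ γ') P K (α + (γ - γ')) (β + (γ - γ')) θ ν := by
  obtain ⟨hK, hα, hβ, hθ, hν, hαθ, hβν, hst, hun⟩ := h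
  refine ⟨hK, by linarith, by linarith, hθ, hν, h1, h2, ?_, ?_⟩
  · intro t s hts
    have hq : 0 < μ t / μ s := div_pos (hμ.pos t) (hμ.pos s)
    rw [shift_est μ hμ Φ γ γ']
    calc (μ t / μ s) ^ (γ - γ') * ‖shiftOp μ Φ γ t s * P s‖
        ≤ (μ t / μ s) ^ (γ - γ') * (K * (μ t / μ s) ^ α * μ s ^ (Real.sign s * θ)) :=
          mul_le_mul_of_nonneg_left (hst t s hts) (Real.rpow_pos_of_pos hq _).le
      _ = K * (μ t / μ s) ^ (α + (γ - γ')) * μ s ^ (Real.sign s * θ) := by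
          rw [Real.rpow_add hq]; ring
  · intro t s hts
    have hq : 0 < μ t / μ s := div_pos (hμ.pos t) (hμ.pos s)
    rw [shift_est μ hμ Φ γ γ']
    calc (μ t / μ s) ^ (γ - γ') * ‖shiftOp μ Φ γ t s * (1 - P s)‖
        ≤ (μ t / μ s) ^ (γ - γ') * (K * (μ t / μ s) ^ β * μ s ^ (Real.sign s * ν)) :=
          mul_le_mul_of_nonneg_left (hun t s hts) (Real.rpow_pos_of_pos hq _).le
      _ = K * (μ t / μ s) ^ (β + (γ - γ')) * μ s ^ (Real.sign s * ν) := by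
          rw [Real.rpow_add hq]; ring

/-- on every bounded spectral gap the optimal stable ratio tends to `0`
at the left endpoint and the optimal unstable ratio tends to `0` at the right endpoint. -/
theorem stmt6 {M : Type*} [NormedRing M] [NormedAlgebra ℝ M] [NormOneClass M]
    (μ : ℝ → ℝ) (hμ : GrowthRate μ) (Φ : ℝ → ℝ → M) (P : ℝ → M)
    (Khat c ep : ℝ) (hep : 0 ≤ ep) (hg : HasNmuGrowth μ Φ Khat c ep)
    (hproj : IsInvProj Φ P)
    (hP0 : ∃ s : ℝ, P s ≠ 0) (hP1 : ∃ s : ℝ, P s ≠ 1)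
    (b a : ℝ) (hba : b < a)
    (hb : b ∉ NmuResolvent μ Φ) (ha : a ∉ NmuResolvent μ Φ)
    (hgap : ∀ γ ∈ Set.Ioo b a,
      ∃ K α β θ ν, IsNmuD μ (shiftOp μ Φ γ) P K α β θ ν) :
    Filter.Tendsto (stRatio μ Φ P) (nhdsWithin b (Set.Ioo b a)) (nhds 0) ∧
    Filter.Tendsto (unRatio μ Φ P) (nhdsWithin a (Set.Ioo b a)) (nhds 0) := by
  -- lower bound for the stable set
  have stlb : ∀ γ ∈ Set.Ioo b a,
      ∀ x ∈ (fun p : ℝ × ℝ => p.1 + p.2) '' StSet μ Φ P γ, -(γ - b) ≤ x := by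
    rintro γ hγ x ⟨⟨α, θ⟩, ⟨K, β, ν, hd⟩, rfl⟩
    by_contra hlt
    push_neg at hlt
    apply hb
    have hβν : 0 < β - ν := hd.2.2.2.2.2.2.1
    exact ⟨P, K, α + (γ - b), β + (γ - b), θ, ν, hproj,
      shift_nmud μ hμ Φ P γ b K α β θ ν hd (by simp at hlt ⊢; linarith)
        (by have := hγ.1; linarith)⟩
  -- upper bound for the unstable set
  have unub : ∀ γ ∈ Set.Ioo b a,
      ∀ x ∈ (fun p : ℝ × ℝ => p.1 - p.2) '' UnSet μ Φ P γ, x ≤ a - γ := by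
    rintro γ hγ x ⟨⟨β, ν⟩, ⟨K, α, θ, hd⟩, rfl⟩
    by_contra hlt
    push_neg at hlt
    apply ha
    have hαθ : α + θ < 0 := hd.2.2.2.2.2.1
    exact ⟨P, K, α + (γ - a), β + (γ - a), θ, ν, hproj,
      shift_nmud μ hμ Φ P γ a K α β θ ν hd (by have := hγ.2; linarith)
        (by simp at hlt ⊢; linarith)⟩
  have key : ∀ γ ∈ Set.Ioo b a,
      (-(γ - b) ≤ stRatio μ Φ P γ ∧ stRatio μ Φ P γ ≤ 0) ∧
      (0 ≤ unRatio μ Φ P γ ∧ unRatio μ Φ P γ ≤ a - γ) := by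
    intro γ hγ
    obtain ⟨K, α, β, θ, ν, hd⟩ := hgap γ hγ
    have hmemS : (α + θ) ∈ (fun p : ℝ × ℝ => p.1 + p.2) '' StSet μ Φ P γ :=
      ⟨(α, θ), ⟨K, β, ν, hd⟩, rfl⟩
    have hmemU : (β - ν) ∈ (fun p : ℝ × ℝ => p.1 - p.2) '' UnSet μ Φ P γ :=
      ⟨(β, ν), ⟨K, α, θ, hd⟩, rfl⟩
    have hbddS : BddBelow ((fun p : ℝ × ℝ => p.1 + p.2) '' StSet μ Φ P γ) :=
      ⟨-(γ - b), fun x hx => stlb γ hγ x hx⟩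
    have hbddU : BddAbove ((fun p : ℝ × ℝ => p.1 - p.2) '' UnSet μ Φ P γ) :=
      ⟨a - γ, fun x hx => unub γ hγ x hx⟩
    refine ⟨⟨le_csInf ⟨_, hmemS⟩ (stlb γ hγ), ?_⟩,
      ⟨?_, csSup_le ⟨_, hmemU⟩ (unub γ hγ)⟩⟩
    · exact le_trans (csInf_le hbddS hmemS) (le_of_lt hd.2.2.2.2.2.1)
    · exact le_trans (le_of_lt hd.2.2.2.2.2.2.1) (le_csSup hbddU hmemU)
  constructor
  · have hg0 : Filter.Tendsto (fun γ : ℝ => -(γ - b)) (nhdsWithin b (Set.Ioo b a)) (nhds 0) := by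
      have : Filter.Tendsto (fun γ : ℝ => -(γ - b)) (nhds b) (nhds (-(b - b))) :=
        (Filter.Tendsto.sub tendsto_id tendsto_const_nhds).neg
      simpa using this.mono_left nhdsWithin_le_nhds
    refine tendsto_of_tendsto_of_tendsto_of_le_of_le' hg0 tendsto_const_nhds ?_ ?_
    · exact eventually_mem_nhdsWithin.mono fun γ hγ => (key γ hγ).1.1
    · exact eventually_mem_nhdsWithin.mono fun γ hγ => (key γ hγ).1.2
  · have hg0 : Filter.Tendsto (fun γ : ℝ => a - γ) (nhdsWithin a (Set.Ioo b a)) (nhds 0) := by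
      have : Filter.Tendsto (fun γ : ℝ => a - γ) (nhds a) (nhds (a - a)) :=
        Filter.Tendsto.sub tendsto_const_nhds tendsto_id
      simpa using this.mono_left nhdsWithin_le_nhds
    refine tendsto_of_tendsto_of_tendsto_of_le_of_le' tendsto_const_nhds hg0 ?_ ?_
    · exact eventually_mem_nhdsWithin.mono fun γ hγ => (key γ hγ).2.1
    · exact eventually_mem_nhdsWithin.mono fun γ hγ => (key γ hγ).2.2
end
end

section
/- Suppose ẏ = A(t)y admits a nonuniform μ-dichotomy with parameters (P; α, β, θ, ν) and constant K, and is nonuniformly (μ, ε)-kinematically similar to ż = B(t)z via S with constant M_ε, where 3ε < min{-(α+θ), β-ν}. Then ż = B(t)z admits a nonuniform μ-dichotomy with invariant projector Q(s) = S(s)^{-1}P(s)S(s), parameters (Q; α+ε, β-ε, θ+2ε, ν+2ε), and constant K M_ε². -/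
open Real Set Filter

noncomputable section

private lemma grow_lt_one {μ : ℝ → ℝ} (hμ : GrowthRate μ) {x : ℝ} (hx : x < 0) : μ x < 1 := by
  have := hμ.mono hx; rwa [hμ.one] at this

private lemma grow_ge_one {μ : ℝ → ℝ} (hμ : GrowthRate μ) {x : ℝ} (hx : 0 ≤ x) : 1 ≤ μ x := by
  rcases eq_or_lt_of_le hx with h | h
  · rw [← h, hμ.one]
  · exact le_of_lt (by simpa [hμ.one] using hμ.mono h)

private lemma f_one {μ : ℝ → ℝ} (hμ : GrowthRate μ) {ε : ℝ} {x : ℝ} (hx : 0 ≤ x) :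
    μ x ^ ((Real.sign x - 1) * ε) = 1 := by
  rcases eq_or_lt_of_le hx with h | h
  · rw [← h, hμ.one, Real.one_rpow]
  · rw [Real.sign_of_pos h]; norm_num

private lemma g_one {μ : ℝ → ℝ} (hμ : GrowthRate μ) {ε : ℝ} {x : ℝ} (hx : x ≤ 0) :
    μ x ^ ((Real.sign x + 1) * ε) = 1 := by
  rcases eq_or_lt_of_le hx with h | h
  · rw [h, hμ.one, Real.one_rpow]
  · rw [Real.sign_of_neg h]; norm_num

/-- `x ↦ μ x ^ ((sign x - 1) * ε)` is antitone. -/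
private lemma key1 {μ : ℝ → ℝ} (hμ : GrowthRate μ) {ε : ℝ} (hε : 0 ≤ ε) {s t : ℝ}
    (hst : s ≤ t) :
    μ t ^ ((Real.sign t - 1) * ε) ≤ μ s ^ ((Real.sign s - 1) * ε) := by
  have hμs := hμ.pos s
  have hμt := hμ.pos t
  rcases lt_or_ge t 0 with ht | ht
  · have hs : s < 0 := lt_of_le_of_lt hst ht
    rw [Real.sign_of_neg ht, Real.sign_of_neg hs]
    have h1 : ((-1:ℝ) - 1) * ε = -(2 * ε) := by ring
    have hle : μ s ≤ μ t := hμ.mono.le_iff_le.mpr hst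
    have hmm : μ s ^ (2 * ε) ≤ μ t ^ (2 * ε) :=
      Real.rpow_le_rpow hμs.le hle (by linarith)
    rw [h1, Real.rpow_neg hμt.le, Real.rpow_neg hμs.le]
    exact inv_anti₀ (Real.rpow_pos_of_pos hμs _) hmm
  · rw [f_one hμ ht]
    rcases lt_or_ge s 0 with hs | hs
    · rw [Real.sign_of_neg hs]
      have h1 : ((-1:ℝ) - 1) * ε = -(2 * ε) := by ring
      rw [h1]
      exact Real.one_le_rpow_of_pos_of_le_one_of_nonpos hμs (grow_lt_one hμ hs).le
        (by linarith)
    · rw [f_one hμ hs]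

/-- `x ↦ μ x ^ ((sign x + 1) * ε)` is monotone. -/
private lemma key2 {μ : ℝ → ℝ} (hμ : GrowthRate μ) {ε : ℝ} (hε : 0 ≤ ε) {s t : ℝ}
    (hts : t ≤ s) :
    μ t ^ ((Real.sign t + 1) * ε) ≤ μ s ^ ((Real.sign s + 1) * ε) := by
  have hμs := hμ.pos s
  have hμt := hμ.pos t
  rcases lt_or_ge 0 s with hs | hs
  · rw [Real.sign_of_pos hs]
    rcases lt_or_ge 0 t with ht | ht
    · rw [Real.sign_of_pos ht]
      exact Real.rpow_le_rpow hμt.le (hμ.mono.le_iff_le.mpr hts) (by linarith)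
    · rw [g_one hμ ht]
      exact Real.one_le_rpow (grow_ge_one hμ hs.le) (by linarith)
  · rw [g_one hμ hs, g_one hμ (le_trans hts hs)]

private lemma combo1 {a b p q ε : ℝ} (ha : 0 < a) (hb : 0 < b)
    (h : a ^ ((p - 1) * ε) ≤ b ^ ((q - 1) * ε)) :
    a ^ (p * ε) * b ^ (q * ε) ≤ (a / b) ^ ε * b ^ (q * (2 * ε)) := by
  have h2 := mul_le_mul_of_nonneg_right h
    (mul_nonneg (Real.rpow_nonneg ha.le ε) (Real.rpow_nonneg hb.le (q * ε)))
  have e1 : a ^ ((p - 1) * ε) * (a ^ ε * b ^ (q * ε)) = a ^ (p * ε) * b ^ (q * ε) := by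
    rw [← mul_assoc, ← Real.rpow_add ha]
    congr 2
    ring
  have e2 : b ^ ((q - 1) * ε) * (a ^ ε * b ^ (q * ε)) = (a / b) ^ ε * b ^ (q * (2 * ε)) := by
    rw [div_eq_mul_inv, Real.mul_rpow ha.le (inv_nonneg.mpr hb.le), Real.inv_rpow hb.le,
      ← Real.rpow_neg hb.le]
    rw [show b ^ ((q - 1) * ε) * (a ^ ε * b ^ (q * ε)) = a ^ ε * (b ^ ((q - 1) * ε) * b ^ (q * ε)) by ring,
      show a ^ ε * b ^ (-ε) * b ^ (q * (2 * ε)) = a ^ ε * (b ^ (-ε) * b ^ (q * (2 * ε))) by ring,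
      ← Real.rpow_add hb, ← Real.rpow_add hb]
    congr 2
    ring
  rw [← e1, ← e2]
  exact h2

private lemma combo2 {a b p q ε : ℝ} (ha : 0 < a) (hb : 0 < b)
    (h : a ^ ((p + 1) * ε) ≤ b ^ ((q + 1) * ε)) :
    a ^ (p * ε) * b ^ (q * ε) ≤ (a / b) ^ (-ε) * b ^ (q * (2 * ε)) := by
  have h2 := mul_le_mul_of_nonneg_right h
    (mul_nonneg (Real.rpow_nonneg ha.le (-ε)) (Real.rpow_nonneg hb.le (q * ε)))
  have e1 : a ^ ((p + 1) * ε) * (a ^ (-ε) * b ^ (q * ε)) = a ^ (p * ε) * b ^ (q * ε) := by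
    rw [← mul_assoc, ← Real.rpow_add ha]
    congr 2
    ring
  have e2 : b ^ ((q + 1) * ε) * (a ^ (-ε) * b ^ (q * ε)) = (a / b) ^ (-ε) * b ^ (q * (2 * ε)) := by
    rw [div_eq_mul_inv, Real.mul_rpow ha.le (inv_nonneg.mpr hb.le), Real.inv_rpow hb.le,
      ← Real.rpow_neg hb.le, neg_neg]
    rw [show b ^ ((q + 1) * ε) * (a ^ (-ε) * b ^ (q * ε)) = a ^ (-ε) * (b ^ ((q + 1) * ε) * b ^ (q * ε)) by ring,
      show a ^ (-ε) * b ^ ε * b ^ (q * (2 * ε)) = a ^ (-ε) * (b ^ ε * b ^ (q * (2 * ε))) by ring,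
      ← Real.rpow_add hb, ← Real.rpow_add hb]
    congr 2
    ring
  rw [← e1, ← e2]
  exact h2

/-- transfer of a nonuniform μ-dichotomy through a nonuniform
(μ, ε)-kinematic similarity. -/
theorem stmt9 {M : Type*} [NormedRing M] [NormedAlgebra ℝ M] [NormOneClass M]
    (μ : ℝ → ℝ) (hμ : GrowthRate μ) (Φ Ψ : ℝ → ℝ → M) (P S Sinv : ℝ → M)
    (K α β θ ν ε Mc : ℝ) (hε : 0 ≤ ε)
    (hd : IsNmuD μ Φ P K α β θ ν)
    (hsim : KinSim μ Φ Ψ S Sinv ε Mc)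
    (h3 : 3 * ε < min (-(α + θ)) (β - ν)) :
    IsNmuD μ Ψ (fun s => Sinv s * P s * S s) (K * Mc ^ 2)
      (α + ε) (β - ε) (θ + 2 * ε) (ν + 2 * ε) := by
  obtain ⟨hK, hα, hβ, hθ, hν, hαθ, hβν, hP1, hP2⟩ := hd
  obtain ⟨hMc, hSS, hSiS, hSb, hSib, hcom⟩ := hsim
  have hmin1 : 3 * ε < -(α + θ) := lt_of_lt_of_le h3 (min_le_left _ _)
  have hmin2 : 3 * ε < β - ν := lt_of_lt_of_le h3 (min_le_right _ _)
  have hMc1 : 1 ≤ Mc := by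
    have h0 : (1:ℝ) = ‖S 0 * Sinv 0‖ := by rw [hSS 0, norm_one]
    have h1 : ‖S 0 * Sinv 0‖ ≤ ‖S 0‖ * ‖Sinv 0‖ := norm_mul_le _ _
    have h2 : ‖S 0‖ ≤ Mc := by
      have := hSb 0; simpa [Real.sign_zero, hμ.one] using this
    have h3' : ‖Sinv 0‖ ≤ Mc := by
      have := hSib 0; simpa [Real.sign_zero, hμ.one] using this
    nlinarith [norm_nonneg (S 0), norm_nonneg (Sinv 0)]
  have hKMc : 1 ≤ K * Mc ^ 2 := by nlinarith
  have hΨ : ∀ t s : ℝ, Ψ t s = Sinv t * Φ t s * S s := by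
    intro t s
    calc Ψ t s = 1 * Ψ t s := (one_mul _).symm
      _ = Sinv t * S t * Ψ t s := by rw [hSiS t]
      _ = Sinv t * (S t * Ψ t s) := by rw [mul_assoc]
      _ = Sinv t * (Φ t s * S s) := by rw [← hcom t s]
      _ = Sinv t * Φ t s * S s := by rw [mul_assoc]
  refine ⟨hKMc, by linarith, by linarith, by linarith, by linarith, by linarith,
    by linarith, ?_, ?_⟩
  · intro t s hst
    have hμs := hμ.pos s
    have hμt := hμ.pos t
    have hdiv : (0:ℝ) < μ t / μ s := div_pos hμt hμs
    have heq : Ψ t s * (Sinv s * P s * S s) = Sinv t * (Φ t s * P s) * S s := by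
      rw [hΨ t s]
      calc Sinv t * Φ t s * S s * (Sinv s * P s * S s)
          = Sinv t * Φ t s * (S s * Sinv s) * (P s * S s) := by noncomm_ring
        _ = Sinv t * Φ t s * 1 * (P s * S s) := by rw [hSS s]
        _ = Sinv t * (Φ t s * P s) * S s := by noncomm_ring
    show ‖Ψ t s * (Sinv s * P s * S s)‖ ≤
      K * Mc ^ 2 * (μ t / μ s) ^ (α + ε) * μ s ^ (Real.sign s * (θ + 2 * ε))
    rw [heq]
    have hn : ‖Sinv t * (Φ t s * P s) * S s‖ ≤ ‖Sinv t‖ * ‖Φ t s * P s‖ * ‖S s‖ :=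
      le_trans (norm_mul_le _ _)
        (mul_le_mul_of_nonneg_right (norm_mul_le _ _) (norm_nonneg _))
    have hb : ‖Sinv t‖ * ‖Φ t s * P s‖ * ‖S s‖ ≤
        (Mc * μ t ^ (Real.sign t * ε)) * (K * (μ t / μ s) ^ α * μ s ^ (Real.sign s * θ))
          * (Mc * μ s ^ (Real.sign s * ε)) := by
      gcongr <;> first
        | exact norm_nonneg _
        | exact hSib t
        | exact hP1 t s hst
        | exact hSb s
    refine le_trans (le_trans hn hb) ?_
    have hkey : μ t ^ (Real.sign t * ε) * μ s ^ (Real.sign s * ε) ≤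
        (μ t / μ s) ^ ε * μ s ^ (Real.sign s * (2 * ε)) :=
      combo1 hμt hμs (key1 hμ hε hst)
    have e3 : (μ t / μ s) ^ α * (μ t / μ s) ^ ε = (μ t / μ s) ^ (α + ε) :=
      (Real.rpow_add hdiv α ε).symm
    have e4 : μ s ^ (Real.sign s * θ) * μ s ^ (Real.sign s * (2 * ε))
        = μ s ^ (Real.sign s * (θ + 2 * ε)) := by
      rw [← Real.rpow_add hμs]
      congr 1
      ring
    calc (Mc * μ t ^ (Real.sign t * ε)) * (K * (μ t / μ s) ^ α * μ s ^ (Real.sign s * θ))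
          * (Mc * μ s ^ (Real.sign s * ε))
        = K * Mc ^ 2 * ((μ t / μ s) ^ α * μ s ^ (Real.sign s * θ))
            * (μ t ^ (Real.sign t * ε) * μ s ^ (Real.sign s * ε)) := by ring
      _ ≤ K * Mc ^ 2 * ((μ t / μ s) ^ α * μ s ^ (Real.sign s * θ))
            * ((μ t / μ s) ^ ε * μ s ^ (Real.sign s * (2 * ε))) := by
          have hfac : (0:ℝ) ≤ K * Mc ^ 2 * ((μ t / μ s) ^ α * μ s ^ (Real.sign s * θ)) := by
            positivity
          exact mul_le_mul_of_nonneg_left hkey hfac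
      _ = K * Mc ^ 2 * ((μ t / μ s) ^ α * (μ t / μ s) ^ ε)
            * (μ s ^ (Real.sign s * θ) * μ s ^ (Real.sign s * (2 * ε))) := by ring
      _ = K * Mc ^ 2 * (μ t / μ s) ^ (α + ε) * μ s ^ (Real.sign s * (θ + 2 * ε)) := by
          rw [e3, e4]
  · intro t s hts
    have hμs := hμ.pos s
    have hμt := hμ.pos t
    have hdiv : (0:ℝ) < μ t / μ s := div_pos hμt hμs
    have heq : Ψ t s * (1 - Sinv s * P s * S s) = Sinv t * (Φ t s * (1 - P s)) * S s := by
      rw [hΨ t s]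
      calc Sinv t * Φ t s * S s * (1 - Sinv s * P s * S s)
          = Sinv t * Φ t s * S s
              - Sinv t * Φ t s * (S s * Sinv s) * (P s * S s) := by noncomm_ring
        _ = Sinv t * Φ t s * S s - Sinv t * Φ t s * 1 * (P s * S s) := by rw [hSS s]
        _ = Sinv t * (Φ t s * (1 - P s)) * S s := by noncomm_ring
    show ‖Ψ t s * (1 - Sinv s * P s * S s)‖ ≤
      K * Mc ^ 2 * (μ t / μ s) ^ (β - ε) * μ s ^ (Real.sign s * (ν + 2 * ε))
    rw [heq]
    have hn : ‖Sinv t * (Φ t s * (1 - P s)) * S s‖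
        ≤ ‖Sinv t‖ * ‖Φ t s * (1 - P s)‖ * ‖S s‖ :=
      le_trans (norm_mul_le _ _)
        (mul_le_mul_of_nonneg_right (norm_mul_le _ _) (norm_nonneg _))
    have hb : ‖Sinv t‖ * ‖Φ t s * (1 - P s)‖ * ‖S s‖ ≤
        (Mc * μ t ^ (Real.sign t * ε)) * (K * (μ t / μ s) ^ β * μ s ^ (Real.sign s * ν))
          * (Mc * μ s ^ (Real.sign s * ε)) := by
      gcongr <;> first
        | exact norm_nonneg _
        | exact hSib t
        | exact hP2 t s hts
        | exact hSb s
    refine le_trans (le_trans hn hb) ?_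
    have hkey : μ t ^ (Real.sign t * ε) * μ s ^ (Real.sign s * ε) ≤
        (μ t / μ s) ^ (-ε) * μ s ^ (Real.sign s * (2 * ε)) :=
      combo2 hμt hμs (key2 hμ hε hts)
    have e3 : (μ t / μ s) ^ β * (μ t / μ s) ^ (-ε) = (μ t / μ s) ^ (β - ε) := by
      rw [← Real.rpow_add hdiv, sub_eq_add_neg]
    have e4 : μ s ^ (Real.sign s * ν) * μ s ^ (Real.sign s * (2 * ε))
        = μ s ^ (Real.sign s * (ν + 2 * ε)) := by
      rw [← Real.rpow_add hμs]
      congr 1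
      ring
    calc (Mc * μ t ^ (Real.sign t * ε)) * (K * (μ t / μ s) ^ β * μ s ^ (Real.sign s * ν))
          * (Mc * μ s ^ (Real.sign s * ε))
        = K * Mc ^ 2 * ((μ t / μ s) ^ β * μ s ^ (Real.sign s * ν))
            * (μ t ^ (Real.sign t * ε) * μ s ^ (Real.sign s * ε)) := by ring
      _ ≤ K * Mc ^ 2 * ((μ t / μ s) ^ β * μ s ^ (Real.sign s * ν))
            * ((μ t / μ s) ^ (-ε) * μ s ^ (Real.sign s * (2 * ε))) := by
          have hfac : (0:ℝ) ≤ K * Mc ^ 2 * ((μ t / μ s) ^ β * μ s ^ (Real.sign s * ν)) := by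
            positivity
          exact mul_le_mul_of_nonneg_left hkey hfac
      _ = K * Mc ^ 2 * ((μ t / μ s) ^ β * (μ t / μ s) ^ (-ε))
            * (μ s ^ (Real.sign s * ν) * μ s ^ (Real.sign s * (2 * ε))) := by ring
      _ = K * Mc ^ 2 * (μ t / μ s) ^ (β - ε) * μ s ^ (Real.sign s * (ν + 2 * ε)) := by
          rw [e3, e4]
end
end

section
/- Assume ẏ = A(t)y has (Nμ, ε)-growth and is nonuniformly (μ, ε)-kinematically similar to ż = B(t)z. If γ ∈ ρ_{NμD}(A) and 3ε < 𝔊𝔬𝔯^γ (the global optimal ratio of A at γ), then γ ∈ ρ_{NμD}(B). -/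
open Real Set Filter

noncomputable section

/-- Key exponent inequality, stable case. -/
lemma expo_le_stable (μ : ℝ → ℝ) (hμ : GrowthRate μ) {ε : ℝ} (hε : 0 ≤ ε)
    {s t : ℝ} (hst : s ≤ t) :
    μ t ^ (Real.sign t * ε) * μ s ^ (Real.sign s * ε) ≤
      (μ t / μ s) ^ ε * μ s ^ (Real.sign s * (2 * ε)) := by
  have pt := hμ.pos t
  have ps := hμ.pos s
  rw [Real.rpow_def_of_pos pt, Real.rpow_def_of_pos ps, Real.rpow_def_of_pos ps,
    Real.rpow_def_of_pos (div_pos pt ps), Real.log_div pt.ne' ps.ne',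
    ← Real.exp_add, ← Real.exp_add, Real.exp_le_exp]
  have hvu : Real.log (μ s) ≤ Real.log (μ t) :=
    Real.log_le_log ps (hμ.mono.monotone hst)
  rcases lt_trichotomy t 0 with ht | ht | ht
  · -- t < 0, hence s < 0
    have hs : s < 0 := lt_of_le_of_lt hst ht
    rw [Real.sign_of_neg ht, Real.sign_of_neg hs]
    nlinarith [mul_le_mul_of_nonneg_left hvu hε]
  · -- t = 0
    subst ht
    rw [Real.sign_zero, hμ.one, Real.log_one]
    rcases lt_trichotomy s 0 with hs | hs | hs
    · have hμs1 : μ s < 1 := by rw [← hμ.one]; exact hμ.mono hs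
      have hlogs : Real.log (μ s) < 0 := Real.log_neg ps hμs1
      rw [Real.sign_of_neg hs]
      nlinarith
    · subst hs; rw [hμ.one, Real.log_one]; nlinarith
    · exact absurd hst (not_le.mpr hs)
  · -- t > 0
    rw [Real.sign_of_pos ht]
    rcases lt_trichotomy s 0 with hs | hs | hs
    · have hμs1 : μ s < 1 := by rw [← hμ.one]; exact hμ.mono hs
      have hlogs : Real.log (μ s) < 0 := Real.log_neg ps hμs1
      have hμt1 : (1:ℝ) ≤ μ t := by rw [← hμ.one]; exact (hμ.mono ht).le
      have hlogt : 0 ≤ Real.log (μ t) := Real.log_nonneg hμt1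
      rw [Real.sign_of_neg hs]
      nlinarith
    · subst hs; rw [Real.sign_zero, hμ.one, Real.log_one]
      have hμt1 : (1:ℝ) ≤ μ t := by rw [← hμ.one]; exact (hμ.mono ht).le
      have hlogt : 0 ≤ Real.log (μ t) := Real.log_nonneg hμt1
      nlinarith
    · rw [Real.sign_of_pos hs]
      nlinarith [mul_le_mul_of_nonneg_left hvu hε]

/-- Key exponent inequality, unstable case. -/
lemma expo_le_unstable (μ : ℝ → ℝ) (hμ : GrowthRate μ) {ε : ℝ} (hε : 0 ≤ ε)
    {s t : ℝ} (hts : t ≤ s) :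
    μ t ^ (Real.sign t * ε) * μ s ^ (Real.sign s * ε) ≤
      (μ t / μ s) ^ (-ε) * μ s ^ (Real.sign s * (2 * ε)) := by
  have pt := hμ.pos t
  have ps := hμ.pos s
  rw [Real.rpow_def_of_pos pt, Real.rpow_def_of_pos ps, Real.rpow_def_of_pos ps,
    Real.rpow_def_of_pos (div_pos pt ps), Real.log_div pt.ne' ps.ne',
    ← Real.exp_add, ← Real.exp_add, Real.exp_le_exp]
  have huv : Real.log (μ t) ≤ Real.log (μ s) :=
    Real.log_le_log pt (hμ.mono.monotone hts)
  rcases lt_trichotomy s 0 with hs | hs | hs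
  · -- s < 0, hence t < 0
    have ht : t < 0 := lt_of_le_of_lt hts hs
    rw [Real.sign_of_neg ht, Real.sign_of_neg hs]
    nlinarith
  · subst hs
    rw [Real.sign_zero, hμ.one, Real.log_one]
    rcases lt_trichotomy t 0 with ht | ht | ht
    · rw [Real.sign_of_neg ht]; nlinarith
    · subst ht; rw [Real.sign_zero, hμ.one, Real.log_one]; nlinarith
    · exact absurd hts (not_le.mpr ht)
  · -- s > 0
    have hμs1 : (1:ℝ) ≤ μ s := by rw [← hμ.one]; exact (hμ.mono hs).le
    have hlogs : 0 ≤ Real.log (μ s) := Real.log_nonneg hμs1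
    rw [Real.sign_of_pos hs]
    rcases lt_trichotomy t 0 with ht | ht | ht
    · have hμt1 : μ t < 1 := by rw [← hμ.one]; exact hμ.mono ht
      have hlogt : Real.log (μ t) < 0 := Real.log_neg pt hμt1
      rw [Real.sign_of_neg ht]
      nlinarith
    · subst ht; rw [Real.sign_zero, hμ.one, Real.log_one]; nlinarith
    · rw [Real.sign_of_pos ht]
      nlinarith [mul_le_mul_of_nonneg_left huv hε]

/-- if `3ε < 𝔊𝔬𝔯^γ` then resolvent membership transfers through
a nonuniform (μ, ε)-kinematic similarity. -/
theorem stmt11 {M : Type*} [NormedRing M] [NormedAlgebra ℝ M] [NormOneClass M]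
    (μ : ℝ → ℝ) (hμ : GrowthRate μ) (Φ Ψ : ℝ → ℝ → M) (S Sinv : ℝ → M)
    (Khat c ep : ℝ) (hep : 0 ≤ ep) (hg : HasNmuGrowth μ Φ Khat c ep)
    (ε Mc : ℝ) (hε : 0 ≤ ε) (hsim : KinSim μ Φ Ψ S Sinv ε Mc)
    (γ : ℝ) (hγ : γ ∈ NmuResolvent μ Φ)
    (h3 : 3 * ε < Gor μ Φ γ) :
    γ ∈ NmuResolvent μ Ψ := by
  obtain ⟨hMc, hSS, hSinvS, hSn, hSinvn, hconj⟩ := hsim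
  -- extract a dichotomy of the shifted A-system with `3ε < min (-(α+θ)) (β-ν)`
  set T : Set ℝ := {x | ∃ P K α β θ ν, IsInvProj Φ P ∧
      IsNmuD μ (shiftOp μ Φ γ) P K α β θ ν ∧ x = min (-(α + θ)) (β - ν)} with hT
  have hbdd : BddAbove T := by
    by_contra hb
    rw [Gor, ← hT, Real.sSup_of_not_bddAbove hb] at h3
    linarith
  have hne : T.Nonempty := by
    by_contra hn
    rw [Set.not_nonempty_iff_eq_empty] at hn
    rw [Gor, ← hT, hn, Real.sSup_empty] at h3
    linarith
  have h3' : 3 * ε < sSup T := h3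
  obtain ⟨x, hxT, hx3⟩ := (lt_csSup_iff hbdd hne).mp h3'
  obtain ⟨P, K, α, β, θ, ν, ⟨hPP, hPΦ⟩, hd, hxeq⟩ := hxT
  obtain ⟨hK, hα, hβ, hθ, hν, hαθ, hβν, hb1, hb2⟩ := hd
  subst hxeq
  have h3a : 3 * ε < -(α + θ) := lt_of_lt_of_le hx3 (min_le_left _ _)
  have h3b : 3 * ε < β - ν := lt_of_lt_of_le hx3 (min_le_right _ _)
  -- `Ψ` in terms of `Φ`
  have hΨ : ∀ t s, Ψ t s = Sinv t * Φ t s * S s := by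
    intro t s
    calc Ψ t s = Sinv t * S t * Ψ t s := by rw [hSinvS, one_mul]
      _ = Sinv t * (S t * Ψ t s) := by rw [mul_assoc]
      _ = Sinv t * (Φ t s * S s) := by rw [← hconj]
      _ = Sinv t * Φ t s * S s := by rw [mul_assoc]
  -- the transformed projector
  set Q : ℝ → M := fun t => Sinv t * P t * S t with hQ
  have hQproj : IsInvProj Ψ Q := by
    constructor
    · intro s
      show Sinv s * P s * S s * (Sinv s * P s * S s) = Sinv s * P s * S s
      calc Sinv s * P s * S s * (Sinv s * P s * S s)
          = Sinv s * P s * (S s * Sinv s) * (P s * S s) := by noncomm_ring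
        _ = Sinv s * (P s * P s) * S s := by rw [hSS, mul_one]; noncomm_ring
        _ = Sinv s * P s * S s := by rw [hPP]
    · intro t s
      show Sinv t * P t * S t * Ψ t s = Ψ t s * (Sinv s * P s * S s)
      rw [hΨ]
      calc Sinv t * P t * S t * (Sinv t * Φ t s * S s)
          = Sinv t * P t * (S t * Sinv t) * (Φ t s * S s) := by noncomm_ring
        _ = Sinv t * (P t * Φ t s) * S s := by rw [hSS, mul_one]; noncomm_ring
        _ = Sinv t * (Φ t s * P s) * S s := by rw [hPΦ]
        _ = Sinv t * Φ t s * (S s * Sinv s) * (P s * S s) := by rw [hSS, mul_one]; noncomm_ring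
        _ = Sinv t * Φ t s * S s * (Sinv s * P s * S s) := by noncomm_ring
  -- conjugation identities for the shifted systems
  have hid1 : ∀ t s : ℝ, shiftOp μ Ψ γ t s * Q s =
      Sinv t * (shiftOp μ Φ γ t s * P s) * S s := by
    intro t s
    show ((μ t / μ s) ^ (-γ) : ℝ) • Ψ t s * Q s
        = Sinv t * (((μ t / μ s) ^ (-γ) : ℝ) • Φ t s * P s) * S s
    rw [smul_mul_assoc, smul_mul_assoc, mul_smul_comm, smul_mul_assoc, hΨ]
    congr 1
    calc Sinv t * Φ t s * S s * (Sinv s * P s * S s)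
        = Sinv t * Φ t s * (S s * Sinv s) * (P s * S s) := by noncomm_ring
      _ = Sinv t * (Φ t s * P s) * S s := by rw [hSS, mul_one]; noncomm_ring
  have hid2 : ∀ t s : ℝ, shiftOp μ Ψ γ t s * (1 - Q s) =
      Sinv t * (shiftOp μ Φ γ t s * (1 - P s)) * S s := by
    intro t s
    show ((μ t / μ s) ^ (-γ) : ℝ) • Ψ t s * (1 - Q s)
        = Sinv t * (((μ t / μ s) ^ (-γ) : ℝ) • Φ t s * (1 - P s)) * S s
    rw [smul_mul_assoc, smul_mul_assoc, mul_smul_comm, smul_mul_assoc, hΨ]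
    congr 1
    have h1Q : (1 : M) - Q s = Sinv s * (1 - P s) * S s := by
      rw [mul_sub, mul_one, sub_mul, hSinvS]
    rw [h1Q]
    calc Sinv t * Φ t s * S s * (Sinv s * (1 - P s) * S s)
        = Sinv t * Φ t s * (S s * Sinv s) * ((1 - P s) * S s) := by noncomm_ring
      _ = Sinv t * (Φ t s * (1 - P s)) * S s := by rw [hSS, mul_one]; noncomm_ring
  -- `1 ≤ Mc * Mc`
  have hMc1 : (1:ℝ) ≤ Mc * Mc := by
    have h0 : ‖S 0‖ ≤ Mc := by
      have := hSn 0
      rwa [Real.sign_zero, zero_mul, Real.rpow_zero, mul_one] at this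
    have h0' : ‖Sinv 0‖ ≤ Mc := by
      have := hSinvn 0
      rwa [Real.sign_zero, zero_mul, Real.rpow_zero, mul_one] at this
    calc (1:ℝ) = ‖(1:M)‖ := norm_one.symm
      _ = ‖S 0 * Sinv 0‖ := by rw [hSS]
      _ ≤ ‖S 0‖ * ‖Sinv 0‖ := norm_mul_le _ _
      _ ≤ Mc * Mc := mul_le_mul h0 h0' (norm_nonneg _) hMc.le
  have hK0 : (0:ℝ) < K := lt_of_lt_of_le one_pos hK
  refine ⟨Q, Mc * Mc * K, α + ε, β - ε, θ + 2 * ε, ν + 2 * ε, hQproj, ?_, ?_, ?_, ?_, ?_, ?_, ?_, ?_, ?_⟩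
  · nlinarith
  · linarith
  · linarith
  · linarith
  · linarith
  · linarith
  · linarith
  · -- stable estimate
    intro t s hst
    have pt := hμ.pos t
    have ps := hμ.pos s
    have hds : (0:ℝ) < μ t / μ s := div_pos pt ps
    calc ‖shiftOp μ Ψ γ t s * Q s‖
        = ‖Sinv t * (shiftOp μ Φ γ t s * P s) * S s‖ := by rw [hid1]
      _ ≤ ‖Sinv t * (shiftOp μ Φ γ t s * P s)‖ * ‖S s‖ := norm_mul_le _ _
      _ ≤ ‖Sinv t‖ * ‖shiftOp μ Φ γ t s * P s‖ * ‖S s‖ := by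
          gcongr
          exact norm_mul_le _ _
      _ ≤ (Mc * μ t ^ (Real.sign t * ε)) *
            (K * (μ t / μ s) ^ α * μ s ^ (Real.sign s * θ)) *
            (Mc * μ s ^ (Real.sign s * ε)) := by
          refine mul_le_mul (mul_le_mul (hSinvn t) (hb1 t s hst) (norm_nonneg _) ?_)
            (hSn s) (norm_nonneg _) ?_
          · exact le_of_lt (mul_pos hMc (Real.rpow_pos_of_pos pt _))
          · have h1 : (0:ℝ) < Mc * μ t ^ (Real.sign t * ε) :=
              mul_pos hMc (Real.rpow_pos_of_pos pt _)
            have h2 : (0:ℝ) ≤ K * (μ t / μ s) ^ α * μ s ^ (Real.sign s * θ) :=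
              le_of_lt (mul_pos (mul_pos hK0 (Real.rpow_pos_of_pos hds _))
                (Real.rpow_pos_of_pos ps _))
            exact mul_nonneg h1.le h2
      _ = (Mc * Mc * K) * ((μ t / μ s) ^ α * μ s ^ (Real.sign s * θ)) *
            (μ t ^ (Real.sign t * ε) * μ s ^ (Real.sign s * ε)) := by ring
      _ ≤ (Mc * Mc * K) * ((μ t / μ s) ^ α * μ s ^ (Real.sign s * θ)) *
            ((μ t / μ s) ^ ε * μ s ^ (Real.sign s * (2 * ε))) := by
          refine mul_le_mul_of_nonneg_left (expo_le_stable μ hμ hε hst) ?_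
          have h2 : (0:ℝ) ≤ (μ t / μ s) ^ α * μ s ^ (Real.sign s * θ) :=
            le_of_lt (mul_pos (Real.rpow_pos_of_pos hds _) (Real.rpow_pos_of_pos ps _))
          exact mul_nonneg (by nlinarith) h2
      _ = Mc * Mc * K * (μ t / μ s) ^ (α + ε) * μ s ^ (Real.sign s * (θ + 2 * ε)) := by
          rw [Real.rpow_add hds, mul_add, Real.rpow_add ps]; ring
  · -- unstable estimate
    intro t s hts
    have pt := hμ.pos t
    have ps := hμ.pos s
    have hds : (0:ℝ) < μ t / μ s := div_pos pt ps
    calc ‖shiftOp μ Ψ γ t s * (1 - Q s)‖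
        = ‖Sinv t * (shiftOp μ Φ γ t s * (1 - P s)) * S s‖ := by rw [hid2]
      _ ≤ ‖Sinv t * (shiftOp μ Φ γ t s * (1 - P s))‖ * ‖S s‖ := norm_mul_le _ _
      _ ≤ ‖Sinv t‖ * ‖shiftOp μ Φ γ t s * (1 - P s)‖ * ‖S s‖ := by
          gcongr
          exact norm_mul_le _ _
      _ ≤ (Mc * μ t ^ (Real.sign t * ε)) *
            (K * (μ t / μ s) ^ β * μ s ^ (Real.sign s * ν)) *
            (Mc * μ s ^ (Real.sign s * ε)) := by
          refine mul_le_mul (mul_le_mul (hSinvn t) (hb2 t s hts) (norm_nonneg _) ?_)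
            (hSn s) (norm_nonneg _) ?_
          · exact le_of_lt (mul_pos hMc (Real.rpow_pos_of_pos pt _))
          · have h1 : (0:ℝ) < Mc * μ t ^ (Real.sign t * ε) :=
              mul_pos hMc (Real.rpow_pos_of_pos pt _)
            have h2 : (0:ℝ) ≤ K * (μ t / μ s) ^ β * μ s ^ (Real.sign s * ν) :=
              le_of_lt (mul_pos (mul_pos hK0 (Real.rpow_pos_of_pos hds _))
                (Real.rpow_pos_of_pos ps _))
            exact mul_nonneg h1.le h2
      _ = (Mc * Mc * K) * ((μ t / μ s) ^ β * μ s ^ (Real.sign s * ν)) *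
            (μ t ^ (Real.sign t * ε) * μ s ^ (Real.sign s * ε)) := by ring
      _ ≤ (Mc * Mc * K) * ((μ t / μ s) ^ β * μ s ^ (Real.sign s * ν)) *
            ((μ t / μ s) ^ (-ε) * μ s ^ (Real.sign s * (2 * ε))) := by
          refine mul_le_mul_of_nonneg_left (expo_le_unstable μ hμ hε hts) ?_
          have h2 : (0:ℝ) ≤ (μ t / μ s) ^ β * μ s ^ (Real.sign s * ν) :=
            le_of_lt (mul_pos (Real.rpow_pos_of_pos hds _) (Real.rpow_pos_of_pos ps _))
          exact mul_nonneg (by nlinarith) h2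
      _ = Mc * Mc * K * (μ t / μ s) ^ (β - ε) * μ s ^ (Real.sign s * (ν + 2 * ε)) := by
          rw [show β - ε = β + (-ε) by ring, Real.rpow_add hds, mul_add, Real.rpow_add ps]
          ring
end
end

section
/- Assume ẏ = A(t)y has (Nμ, ε)-growth and the systems A and B are nonuniformly (μ, ε)-kinematically similar. Then ρ_{NμD}^{3ε}(A) ⊆ ρ_{NμD}(B) and ρ_{NμD}^{3ε}(B) ⊆ ρ_{NμD}(A); equivalently Σ_{NμD}(A) ⊆ Σ_{NμD}^{3ε}(B) and Σ_{NμD}(B) ⊆ Σ_{NμD}^{3ε}(A). -/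
open Real Set Filter

noncomputable section

/-- The ε-interior of the nonuniform μ-resolvent. -/
def epsResolvent {M : Type*} [NormedRing M] [NormedAlgebra ℝ M] (μ : ℝ → ℝ)
    (Φ : ℝ → ℝ → M) (ε : ℝ) : Set ℝ :=
  {γ | γ ∈ NmuResolvent μ Φ ∧ ε < Gor μ Φ γ}

/-! Conjugating a dichotomy projector `P` of the `γ`-shifted system of `Φ` by the Lyapunov
function gives a projector `S⁻¹ P S` for `Ψ`. The cost of the conjugation,
`‖S⁻¹(t)‖ ‖S(s)‖ ≤ Mc² μ(t)^{sgn(t) ε} μ(s)^{sgn(s) ε}`, is dominated by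
`(μ(t)/μ(s))^{±ε} μ(s)^{2 sgn(s) ε}`, so the exponents `(α, β, θ, ν)` of `Φ` become
`(α + ε, β - ε, θ + 2ε, ν + 2ε)` for `Ψ`. These still form a dichotomy when
`α + θ < -3ε` and `β - ν > 3ε`, which is what `𝔊𝔬𝔯^γ > 3ε` provides. -/

namespace GrowthRate

variable {μ : ℝ → ℝ} {ε : ℝ}

lemma one_le_of_nonneg (hμ : GrowthRate μ) {r : ℝ} (hr : 0 ≤ r) : 1 ≤ μ r :=
  hμ.one ▸ hμ.mono.monotone hr

lemma le_one_of_nonpos (hμ : GrowthRate μ) {r : ℝ} (hr : r ≤ 0) : μ r ≤ 1 :=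
  hμ.one ▸ hμ.mono.monotone hr

lemma rpow_sign_add_one_mul (hμ : GrowthRate μ) (hε : 0 ≤ ε) (r : ℝ) :
    μ r ^ ((Real.sign r + 1) * ε) = max 1 (μ r ^ (2 * ε)) := by
  rcases lt_trichotomy r 0 with hr | rfl | hr
  · rw [Real.sign_of_neg hr, neg_add_cancel, zero_mul, Real.rpow_zero, max_eq_left]
    exact Real.rpow_le_one (hμ.pos r).le (hμ.le_one_of_nonpos hr.le) (by linarith)
  · rw [hμ.one, Real.one_rpow, Real.one_rpow, max_self]
  · rw [Real.sign_of_pos hr, one_add_one_eq_two, max_eq_right]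
    exact Real.one_le_rpow (hμ.one_le_of_nonneg hr.le) (by linarith)

lemma rpow_sign_sub_one_mul (hμ : GrowthRate μ) (hε : 0 ≤ ε) (r : ℝ) :
    μ r ^ ((Real.sign r - 1) * ε) = max 1 (μ r ^ (-(2 * ε))) := by
  rcases lt_trichotomy r 0 with hr | rfl | hr
  · rw [Real.sign_of_neg hr, show ((-1 : ℝ) - 1) * ε = -(2 * ε) by ring, max_eq_right]
    exact Real.one_le_rpow_of_pos_of_le_one_of_nonpos (hμ.pos r)
      (hμ.le_one_of_nonpos hr.le) (by linarith)
  · rw [hμ.one, Real.one_rpow, Real.one_rpow, max_self]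
  · rw [Real.sign_of_pos hr, sub_self, zero_mul, Real.rpow_zero, max_eq_left]
    exact Real.rpow_le_one_of_one_le_of_nonpos (hμ.one_le_of_nonneg hr.le) (by linarith)

lemma monotone_rpow_sign_add_one_mul (hμ : GrowthRate μ) (hε : 0 ≤ ε) :
    Monotone fun r => μ r ^ ((Real.sign r + 1) * ε) := by
  intro t s hts
  simp only [hμ.rpow_sign_add_one_mul hε]
  exact max_le_max le_rfl
    (Real.rpow_le_rpow (hμ.pos t).le (hμ.mono.monotone hts) (by linarith))

lemma antitone_rpow_sign_sub_one_mul (hμ : GrowthRate μ) (hε : 0 ≤ ε) :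
    Antitone fun r => μ r ^ ((Real.sign r - 1) * ε) := by
  intro s t hst
  simp only [hμ.rpow_sign_sub_one_mul hε]
  exact max_le_max le_rfl
    (Real.rpow_le_rpow_of_nonpos (hμ.pos s) (hμ.mono.monotone hst) (by linarith))

/-- Both sides are `μ(t)^ε μ(s)^{sgn(s) ε}` times the antitone weight
`μ(r)^{(sgn r - 1) ε}`, evaluated at `r = t` and `r = s` respectively. -/
lemma rpow_sign_mul_rpow_sign_le_of_le (hμ : GrowthRate μ) (hε : 0 ≤ ε) {t s : ℝ}
    (hst : s ≤ t) :
    μ t ^ (Real.sign t * ε) * μ s ^ (Real.sign s * ε) ≤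
      (μ t / μ s) ^ ε * μ s ^ (Real.sign s * (2 * ε)) := by
  have ht := hμ.pos t
  have hs := hμ.pos s
  have hlhs : μ t ^ (Real.sign t * ε) * μ s ^ (Real.sign s * ε) =
      μ t ^ ε * μ s ^ (Real.sign s * ε) * μ t ^ ((Real.sign t - 1) * ε) := by
    rw [mul_right_comm, ← Real.rpow_add ht]
    ring_nf
  have hrhs : (μ t / μ s) ^ ε * μ s ^ (Real.sign s * (2 * ε)) =
      μ t ^ ε * μ s ^ (Real.sign s * ε) * μ s ^ ((Real.sign s - 1) * ε) := by
    rw [Real.div_rpow ht.le hs.le, div_eq_mul_inv, ← Real.rpow_neg hs.le, mul_assoc,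
      mul_assoc, ← Real.rpow_add hs, ← Real.rpow_add hs]
    ring_nf
  rw [hlhs, hrhs]
  exact mul_le_mul_of_nonneg_left (hμ.antitone_rpow_sign_sub_one_mul hε hst) (by positivity)

/-- Both sides are `μ(t)^{-ε} μ(s)^{sgn(s) ε}` times the monotone weight
`μ(r)^{(sgn r + 1) ε}`, evaluated at `r = t` and `r = s` respectively. -/
lemma rpow_sign_mul_rpow_sign_le_of_ge (hμ : GrowthRate μ) (hε : 0 ≤ ε) {t s : ℝ}
    (hts : t ≤ s) :
    μ t ^ (Real.sign t * ε) * μ s ^ (Real.sign s * ε) ≤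
      (μ t / μ s) ^ (-ε) * μ s ^ (Real.sign s * (2 * ε)) := by
  have ht := hμ.pos t
  have hs := hμ.pos s
  have hlhs : μ t ^ (Real.sign t * ε) * μ s ^ (Real.sign s * ε) =
      μ t ^ (-ε) * μ s ^ (Real.sign s * ε) * μ t ^ ((Real.sign t + 1) * ε) := by
    rw [mul_right_comm, ← Real.rpow_add ht]
    ring_nf
  have hrhs : (μ t / μ s) ^ (-ε) * μ s ^ (Real.sign s * (2 * ε)) =
      μ t ^ (-ε) * μ s ^ (Real.sign s * ε) * μ s ^ ((Real.sign s + 1) * ε) := by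
    rw [Real.div_rpow ht.le hs.le, div_eq_mul_inv, ← Real.rpow_neg hs.le, mul_assoc,
      mul_assoc, ← Real.rpow_add hs, ← Real.rpow_add hs]
    ring_nf
  rw [hlhs, hrhs]
  exact mul_le_mul_of_nonneg_left (hμ.monotone_rpow_sign_add_one_mul hε hts) (by positivity)

end GrowthRate

namespace KinSim

variable {M : Type*} [NormedRing M] {μ : ℝ → ℝ} {Φ Ψ : ℝ → ℝ → M} {S Sinv : ℝ → M}
  {ε Mc : ℝ}

lemma mul_inv_cancel_left (h : KinSim μ Φ Ψ S Sinv ε Mc) (t : ℝ) (X : M) :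
    S t * (Sinv t * X) = X := by
  rw [← mul_assoc, h.2.1, one_mul]

lemma eq_conj (h : KinSim μ Φ Ψ S Sinv ε Mc) (t s : ℝ) :
    Ψ t s = Sinv t * Φ t s * S s := by
  rw [mul_assoc, h.2.2.2.2.2, ← mul_assoc, h.2.2.1, one_mul]

lemma symm (h : KinSim μ Φ Ψ S Sinv ε Mc) : KinSim μ Ψ Φ Sinv S ε Mc := by
  refine ⟨h.1, h.2.2.1, h.2.1, h.2.2.2.2.1, h.2.2.2.1, fun t s => ?_⟩
  rw [h.eq_conj, mul_assoc, h.2.1, mul_one]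

lemma mul_conj (h : KinSim μ Φ Ψ S Sinv ε Mc) (t s : ℝ) (X : M) :
    Ψ t s * (Sinv s * X * S s) = Sinv t * (Φ t s * X) * S s := by
  simp only [h.eq_conj, mul_assoc, h.mul_inv_cancel_left]

lemma one_sub_conj (h : KinSim μ Φ Ψ S Sinv ε Mc) (s : ℝ) (X : M) :
    1 - Sinv s * X * S s = Sinv s * (1 - X) * S s := by
  rw [mul_sub, sub_mul, mul_one, h.2.2.1]

lemma isInvProj_conj (h : KinSim μ Φ Ψ S Sinv ε Mc) {P : ℝ → M} (hP : IsInvProj Φ P) :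
    IsInvProj Ψ fun s => Sinv s * P s * S s := by
  refine ⟨fun s => ?_, fun t s => ?_⟩
  · simp only [mul_assoc, h.mul_inv_cancel_left, ← mul_assoc (P s) (P s), hP.1]
  · rw [h.mul_conj, ← hP.2]
    simp only [h.eq_conj, mul_assoc, h.mul_inv_cancel_left]

lemma shiftOp_mul_conj [NormedAlgebra ℝ M] (h : KinSim μ Φ Ψ S Sinv ε Mc) (γ t s : ℝ)
    (X : M) :
    shiftOp μ Ψ γ t s * (Sinv s * X * S s) = Sinv t * (shiftOp μ Φ γ t s * X) * S s := by
  simp only [shiftOp, smul_mul_assoc, mul_smul_comm, h.mul_conj]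

lemma norm_conj_le (h : KinSim μ Φ Ψ S Sinv ε Mc) (t s : ℝ) (X : M) :
    ‖Sinv t * X * S s‖ ≤
      Mc ^ 2 * (μ t ^ (Real.sign t * ε) * μ s ^ (Real.sign s * ε)) * ‖X‖ := by
  obtain ⟨-, -, -, hS, hSinv, -⟩ := h
  have hSinv_nonneg := (norm_nonneg _).trans (hSinv t)
  calc ‖Sinv t * X * S s‖ ≤ ‖Sinv t‖ * ‖X‖ * ‖S s‖ := norm_mul₃_le
    _ ≤ Mc * μ t ^ (Real.sign t * ε) * ‖X‖ * (Mc * μ s ^ (Real.sign s * ε)) := by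
        gcongr
        exacts [hSinv t, hS s]
    _ = _ := by ring

lemma norm_conj_le_of_le (h : KinSim μ Φ Ψ S Sinv ε Mc) (hμ : GrowthRate μ)
    {t s K α θ δ : ℝ} {X : M}
    (hX : ‖X‖ ≤ K * (μ t / μ s) ^ α * μ s ^ (Real.sign s * θ))
    (hw : μ t ^ (Real.sign t * ε) * μ s ^ (Real.sign s * ε) ≤
      (μ t / μ s) ^ δ * μ s ^ (Real.sign s * (2 * ε))) :
    ‖Sinv t * X * S s‖ ≤
      Mc ^ 2 * K * (μ t / μ s) ^ (α + δ) * μ s ^ (Real.sign s * (θ + 2 * ε)) := by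
  have ht := hμ.pos t
  have hs := hμ.pos s
  calc ‖Sinv t * X * S s‖
      ≤ Mc ^ 2 * (μ t ^ (Real.sign t * ε) * μ s ^ (Real.sign s * ε)) * ‖X‖ :=
        h.norm_conj_le t s X
    _ ≤ Mc ^ 2 * ((μ t / μ s) ^ δ * μ s ^ (Real.sign s * (2 * ε))) *
          (K * (μ t / μ s) ^ α * μ s ^ (Real.sign s * θ)) :=
        mul_le_mul (mul_le_mul_of_nonneg_left hw (sq_nonneg Mc)) hX (norm_nonneg X)
          (by positivity)
    _ = _ := by
        rw [Real.rpow_add (by positivity), mul_add, Real.rpow_add hs]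
        ring

end KinSim

section Dichotomy

variable {M : Type*} [NormedRing M] [NormedAlgebra ℝ M] {μ : ℝ → ℝ} {Φ Ψ : ℝ → ℝ → M}
  {S Sinv : ℝ → M} {ε Mc : ℝ}

theorem IsNmuD.of_kinSim (hμ : GrowthRate μ) (hε : 0 ≤ ε) (h : KinSim μ Φ Ψ S Sinv ε Mc)
    {γ K α β θ ν : ℝ} {P : ℝ → M} (hd : IsNmuD μ (shiftOp μ Φ γ) P K α β θ ν)
    (hαθ : α + θ < -(3 * ε)) (hβν : 3 * ε < β - ν) :
    IsNmuD μ (shiftOp μ Ψ γ) (fun s => Sinv s * P s * S s) (max 1 (Mc ^ 2 * K))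
      (α + ε) (β - ε) (θ + 2 * ε) (ν + 2 * ε) := by
  obtain ⟨-, -, -, hθ, hν, -, -, hstable, hunstable⟩ := hd
  have hmax (t s a b : ℝ) : Mc ^ 2 * K * (μ t / μ s) ^ a * μ s ^ b ≤
      max 1 (Mc ^ 2 * K) * (μ t / μ s) ^ a * μ s ^ b := by
    have := hμ.pos t
    have := hμ.pos s
    gcongr
    exact le_max_right _ _
  refine ⟨le_max_left _ _, by linarith, by linarith, by linarith, by linarith, by linarith,
    by linarith, fun t s hst => ?_, fun t s hts => ?_⟩
  · rw [h.shiftOp_mul_conj]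
    exact (h.norm_conj_le_of_le hμ (hstable t s hst)
      (hμ.rpow_sign_mul_rpow_sign_le_of_le hε hst)).trans (hmax t s _ _)
  · rw [h.one_sub_conj, h.shiftOp_mul_conj, sub_eq_add_neg β]
    exact (h.norm_conj_le_of_le hμ (hunstable t s hts)
      (hμ.rpow_sign_mul_rpow_sign_le_of_ge hε hts)).trans (hmax t s _ _)

lemma exists_isNmuD_of_mem_epsResolvent {c γ : ℝ} (hγ : γ ∈ epsResolvent μ Φ c) :
    ∃ P K α β θ ν, IsInvProj Φ P ∧ IsNmuD μ (shiftOp μ Φ γ) P K α β θ ν ∧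
      c < min (-(α + θ)) (β - ν) := by
  obtain ⟨⟨P₀, K₀, α₀, β₀, θ₀, ν₀, hP₀, hd₀⟩, hc⟩ := hγ
  obtain ⟨x, ⟨P, K, α, β, θ, ν, hP, hd, rfl⟩, hx⟩ :=
    exists_lt_of_lt_csSup (by exact ⟨_, P₀, K₀, α₀, β₀, θ₀, ν₀, hP₀, hd₀, rfl⟩) hc
  exact ⟨P, K, α, β, θ, ν, hP, hd, hx⟩

theorem epsResolvent_three_mul_subset_of_kinSim (hμ : GrowthRate μ) (hε : 0 ≤ ε)
    (h : KinSim μ Φ Ψ S Sinv ε Mc) : epsResolvent μ Φ (3 * ε) ⊆ NmuResolvent μ Ψ := by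
  intro γ hγ
  obtain ⟨P, K, α, β, θ, ν, hP, hd, hgap⟩ := exists_isNmuD_of_mem_epsResolvent hγ
  rw [lt_min_iff] at hgap
  exact ⟨_, _, _, _, _, _, h.isInvProj_conj hP, hd.of_kinSim hμ hε h (by linarith) hgap.2⟩

end Dichotomy

theorem stmt12_general {M : Type*} [NormedRing M] [NormedAlgebra ℝ M]
    (μ : ℝ → ℝ) (hμ : GrowthRate μ) (Φ Ψ : ℝ → ℝ → M) (S Sinv : ℝ → M)
    (ε Mc : ℝ) (hε : 0 ≤ ε) (hsim : KinSim μ Φ Ψ S Sinv ε Mc) :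
    epsResolvent μ Φ (3 * ε) ⊆ NmuResolvent μ Ψ ∧
    epsResolvent μ Ψ (3 * ε) ⊆ NmuResolvent μ Φ ∧
    (NmuResolvent μ Φ)ᶜ ⊆ (epsResolvent μ Ψ (3 * ε))ᶜ ∧
    (NmuResolvent μ Ψ)ᶜ ⊆ (epsResolvent μ Φ (3 * ε))ᶜ := by
  have hΦΨ := epsResolvent_three_mul_subset_of_kinSim hμ hε hsim
  have hΨΦ := epsResolvent_three_mul_subset_of_kinSim hμ hε hsim.symm
  exact ⟨hΦΨ, hΨΦ, compl_subset_compl.mpr hΨΦ, compl_subset_compl.mpr hΦΨ⟩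

/-- mutual inclusion of the 3ε-interiors of the resolvents of
nonuniformly (μ, ε)-kinematically similar systems, equivalently the spectra
are contained in the 3ε-neighborhoods of each other's spectra. -/
theorem stmt12 {M : Type*} [NormedRing M] [NormedAlgebra ℝ M] [NormOneClass M]
    (μ : ℝ → ℝ) (hμ : GrowthRate μ) (Φ Ψ : ℝ → ℝ → M) (S Sinv : ℝ → M)
    (Khat c ep : ℝ) (hep : 0 ≤ ep) (hg : HasNmuGrowth μ Φ Khat c ep)
    (ε Mc : ℝ) (hε : 0 ≤ ε) (hsim : KinSim μ Φ Ψ S Sinv ε Mc) :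
    epsResolvent μ Φ (3 * ε) ⊆ NmuResolvent μ Ψ ∧
    epsResolvent μ Ψ (3 * ε) ⊆ NmuResolvent μ Φ ∧
    (NmuResolvent μ Φ)ᶜ ⊆ (epsResolvent μ Ψ (3 * ε))ᶜ ∧
    (NmuResolvent μ Ψ)ᶜ ⊆ (epsResolvent μ Φ (3 * ε))ᶜ :=
  stmt12_general μ hμ Φ Ψ S Sinv ε Mc hε hsim
end
end

section
/- If two systems are uniformly kinematically similar (i.e., (μ,0)-kinematically similar, with S and S^{-1} uniformly bounded), then their nonuniform μ-dichotomy spectra coincide: Σ_{NμD}(A) = Σ_{NμD}(B). -/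
open Real Set Filter

noncomputable section

lemma kinSim_psi_eq {M : Type*} [NormedRing M] (μ : ℝ → ℝ) (Φ Ψ : ℝ → ℝ → M)
    (S Sinv : ℝ → M) (Mc : ℝ) (h : KinSim μ Φ Ψ S Sinv 0 Mc) (t s : ℝ) :
    Ψ t s = Sinv t * Φ t s * S s := by
  obtain ⟨-, h1, h2, -, -, h5⟩ := h
  calc Ψ t s = Sinv t * S t * Ψ t s := by rw [h2, one_mul]
    _ = Sinv t * (S t * Ψ t s) := by rw [mul_assoc]
    _ = Sinv t * (Φ t s * S s) := by rw [h5]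
    _ = Sinv t * Φ t s * S s := by rw [mul_assoc]

lemma kinSim_symm {M : Type*} [NormedRing M] (μ : ℝ → ℝ) (Φ Ψ : ℝ → ℝ → M)
    (S Sinv : ℝ → M) (Mc : ℝ) (h : KinSim μ Φ Ψ S Sinv 0 Mc) :
    KinSim μ Ψ Φ Sinv S 0 Mc := by
  obtain ⟨hM, h1, h2, h3, h4, h5⟩ := h
  refine ⟨hM, h2, h1, h4, h3, fun t s => ?_⟩
  have hpsi := kinSim_psi_eq μ Φ Ψ S Sinv Mc ⟨hM, h1, h2, h3, h4, h5⟩ t s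
  rw [hpsi, mul_assoc, mul_assoc, h1, mul_one]

lemma kinSim_bound_S {M : Type*} [NormedRing M] (μ : ℝ → ℝ) (Φ Ψ : ℝ → ℝ → M)
    (S Sinv : ℝ → M) (Mc : ℝ) (h : KinSim μ Φ Ψ S Sinv 0 Mc) (t : ℝ) :
    ‖S t‖ ≤ Mc := by
  have := h.2.2.2.1 t
  simpa [Real.rpow_zero] using this

lemma kinSim_bound_Sinv {M : Type*} [NormedRing M] (μ : ℝ → ℝ) (Φ Ψ : ℝ → ℝ → M)
    (S Sinv : ℝ → M) (Mc : ℝ) (h : KinSim μ Φ Ψ S Sinv 0 Mc) (t : ℝ) :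
    ‖Sinv t‖ ≤ Mc := by
  have := h.2.2.2.2.1 t
  simpa [Real.rpow_zero] using this

lemma resolvent_subset {M : Type*} [NormedRing M] [NormedAlgebra ℝ M] [NormOneClass M]
    (μ : ℝ → ℝ) (hμ : GrowthRate μ) (Φ Ψ : ℝ → ℝ → M) (S Sinv : ℝ → M) (Mc : ℝ)
    (hsim : KinSim μ Φ Ψ S Sinv 0 Mc) :
    NmuResolvent μ Φ ⊆ NmuResolvent μ Ψ := by
  intro γ hγ
  obtain ⟨P, K, α, β, θ, ν, ⟨hPP, hPΦ⟩, hK, hα, hβ, hθ, hν, hαθ, hβν, hst, hun⟩ := hγ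
  obtain ⟨hMc, h1, h2, h3, h4, h5⟩ := hsim
  have hsim' : KinSim μ Φ Ψ S Sinv 0 Mc := ⟨hMc, h1, h2, h3, h4, h5⟩
  have hS := kinSim_bound_S μ Φ Ψ S Sinv Mc hsim'
  have hSi := kinSim_bound_Sinv μ Φ Ψ S Sinv Mc hsim'
  have hpsi := kinSim_psi_eq μ Φ Ψ S Sinv Mc hsim'
  have hM1 : 1 ≤ Mc * Mc := by
    calc (1 : ℝ) = ‖S 0 * Sinv 0‖ := by rw [h1 0, norm_one]
      _ ≤ ‖S 0‖ * ‖Sinv 0‖ := norm_mul_le _ _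
      _ ≤ Mc * Mc := mul_le_mul (hS 0) (hSi 0) (norm_nonneg _) hMc.le
  set Q : ℝ → M := fun s => Sinv s * P s * S s with hQ
  have hQmul : ∀ s (a : M), Q s * (Sinv s * a) = Sinv s * (P s * a) := by
    intro s a
    calc Q s * (Sinv s * a) = Sinv s * P s * (S s * Sinv s) * a := by
          simp only [hQ]; noncomm_ring
      _ = Sinv s * (P s * a) := by rw [h1, mul_one, mul_assoc]
  have hpsiQ : ∀ t s, Ψ t s * Q s = Sinv t * (Φ t s * P s) * S s := by
    intro t s
    calc Ψ t s * Q s = Sinv t * Φ t s * (S s * Sinv s) * P s * S s := by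
          rw [hpsi t s]; simp only [hQ]; noncomm_ring
      _ = Sinv t * (Φ t s * P s) * S s := by rw [h1, mul_one, mul_assoc (Sinv t)]
  have hQinv : ∀ t s, Q t * Ψ t s = Ψ t s * Q s := by
    intro t s
    rw [hpsiQ, hpsi t s, mul_assoc (Sinv t) (Φ t s)]
    calc Q t * (Sinv t * (Φ t s * S s)) = Sinv t * (P t * (Φ t s * S s)) := hQmul t _
      _ = Sinv t * ((P t * Φ t s) * S s) := by rw [← mul_assoc (P t)]
      _ = Sinv t * ((Φ t s * P s) * S s) := by rw [hPΦ]
      _ = Sinv t * (Φ t s * P s) * S s := by rw [← mul_assoc]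
  have hQproj : ∀ s, Q s * Q s = Q s := by
    intro s
    have e1 : Q s * Q s = Q s * (Sinv s * (P s * S s)) := by
      simp only [hQ]; rw [mul_assoc (Sinv s)]
    rw [e1, hQmul s (P s * S s), ← mul_assoc (P s), hPP]
    simp only [hQ, mul_assoc]
  have hQcompl : ∀ s, 1 - Q s = Sinv s * (1 - P s) * S s := by
    intro s
    rw [mul_sub, mul_one, sub_mul, h2, hQ]
  have key : ∀ t s, shiftOp μ Ψ γ t s * Q s =
      Sinv t * (shiftOp μ Φ γ t s * P s) * S s := by
    intro t s
    simp only [shiftOp, smul_mul_assoc, mul_smul_comm]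
    rw [hpsiQ]
  have key2 : ∀ t s, shiftOp μ Ψ γ t s * (1 - Q s) =
      Sinv t * (shiftOp μ Φ γ t s * (1 - P s)) * S s := by
    intro t s
    have e : Ψ t s * (1 - Q s) = Sinv t * (Φ t s * (1 - P s)) * S s := by
      rw [hQcompl, hpsi t s]
      calc Sinv t * Φ t s * S s * (Sinv s * (1 - P s) * S s)
          = Sinv t * Φ t s * (S s * Sinv s) * (1 - P s) * S s := by noncomm_ring
        _ = Sinv t * (Φ t s * (1 - P s)) * S s := by
            rw [h1, mul_one, mul_assoc (Sinv t) (Φ t s)]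
    simp only [shiftOp, smul_mul_assoc, mul_smul_comm, e]
  refine ⟨Q, Mc * Mc * K, α, β, θ, ν, ⟨hQproj, hQinv⟩, ?_, hα, hβ, hθ, hν, hαθ, hβν,
    ?_, ?_⟩
  · calc (1 : ℝ) = 1 * 1 := (one_mul 1).symm
      _ ≤ (Mc * Mc) * K := mul_le_mul hM1 hK zero_le_one (le_trans zero_le_one hM1)
  · intro t s hts
    have hb := hst t s hts
    have hmt := hμ.pos t
    have hms := hμ.pos s
    calc ‖shiftOp μ Ψ γ t s * Q s‖
        = ‖Sinv t * (shiftOp μ Φ γ t s * P s) * S s‖ := by rw [key]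
      _ ≤ ‖Sinv t‖ * ‖shiftOp μ Φ γ t s * P s‖ * ‖S s‖ :=
          le_trans (norm_mul_le _ _) (by gcongr; exact norm_mul_le _ _)
      _ ≤ Mc * (K * (μ t / μ s) ^ α * μ s ^ (Real.sign s * θ)) * Mc :=
          mul_le_mul (mul_le_mul (hSi t) hb (norm_nonneg _) hMc.le) (hS s)
            (norm_nonneg _) (by positivity)
      _ = Mc * Mc * K * (μ t / μ s) ^ α * μ s ^ (Real.sign s * θ) := by ring
  · intro t s hts
    have hb := hun t s hts
    have hmt := hμ.pos t
    have hms := hμ.pos s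
    calc ‖shiftOp μ Ψ γ t s * (1 - Q s)‖
        = ‖Sinv t * (shiftOp μ Φ γ t s * (1 - P s)) * S s‖ := by rw [key2]
      _ ≤ ‖Sinv t‖ * ‖shiftOp μ Φ γ t s * (1 - P s)‖ * ‖S s‖ :=
          le_trans (norm_mul_le _ _) (by gcongr; exact norm_mul_le _ _)
      _ ≤ Mc * (K * (μ t / μ s) ^ β * μ s ^ (Real.sign s * ν)) * Mc :=
          mul_le_mul (mul_le_mul (hSi t) hb (norm_nonneg _) hMc.le) (hS s)
            (norm_nonneg _) (by positivity)
      _ = Mc * Mc * K * (μ t / μ s) ^ β * μ s ^ (Real.sign s * ν) := by ring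

/-- uniform kinematic similarity preserves the nonuniform
μ-dichotomy spectrum. -/
theorem stmt13 {M : Type*} [NormedRing M] [NormedAlgebra ℝ M] [NormOneClass M]
    (μ : ℝ → ℝ) (hμ : GrowthRate μ) (Φ Ψ : ℝ → ℝ → M) (S Sinv : ℝ → M)
    (Mc : ℝ) (hsim : KinSim μ Φ Ψ S Sinv 0 Mc) :
    (NmuResolvent μ Φ)ᶜ = (NmuResolvent μ Ψ)ᶜ := by
  have h1 := resolvent_subset μ hμ Φ Ψ S Sinv Mc hsim
  have h2 := resolvent_subset μ hμ Ψ Φ Sinv S Mc (kinSim_symm μ Φ Ψ S Sinv Mc hsim)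
  rw [Set.Subset.antisymm h1 h2]
end
end

section
/- For the scalar system u̇ = (-ω₁ - κ t sin t)u with ω₁ > 3κ > 0 and growth rate μ(t) = e^t, the evolution operator Φ(t,s) = exp(-ω₁(t-s) + κt cos t - κs cos s - κ sin t + κ sin s) satisfies |Φ(t,s)| ≤ e^{2κ} e^{(-ω₁+κ)(t-s)} e^{2κ|s|} for all t ≥ s, and |Φ(t,s)| ≤ e^{2κ} e^{(-ω₁-κ)(t-s)} e^{2κ|t|} for all s ≥ t. -/
open Real

lemma mul_cos_le_abs (x : ℝ) : x * Real.cos x ≤ |x| := by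
  calc x * Real.cos x ≤ |x * Real.cos x| := le_abs_self _
    _ = |x| * |Real.cos x| := abs_mul _ _
    _ ≤ |x| * 1 := by
        exact mul_le_mul_of_nonneg_left (Real.abs_cos_le_one x) (abs_nonneg x)
    _ = |x| := mul_one _

/-- growth estimates for the evolution operator of
`u̇ = (-ω₁ - κ t sin t) u`. -/
theorem stmt14 (ω₁ κ : ℝ) (hκ : 0 < κ) (hω : 3 * κ < ω₁)
    (Φ : ℝ → ℝ → ℝ)
    (hΦ : ∀ t s : ℝ, Φ t s =
      Real.exp (-ω₁ * (t - s) + κ * t * Real.cos t - κ * s * Real.cos s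
        - κ * Real.sin t + κ * Real.sin s)) :
    (∀ t s : ℝ, s ≤ t →
      |Φ t s| ≤ Real.exp (2 * κ) * Real.exp ((-ω₁ + κ) * (t - s)) * Real.exp (2 * κ * |s|)) ∧
    (∀ t s : ℝ, t ≤ s →
      |Φ t s| ≤ Real.exp (2 * κ) * Real.exp ((-ω₁ - κ) * (t - s)) * Real.exp (2 * κ * |t|)) := by
  constructor
  · intro t s hst
    rw [hΦ, abs_of_pos (Real.exp_pos _), ← Real.exp_add, ← Real.exp_add, Real.exp_le_exp]
    have h1 : t * Real.cos t ≤ |t| := mul_cos_le_abs t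
    have h2 : -(s * Real.cos s) ≤ |s| := by
      have := mul_cos_le_abs (-s)
      simp [Real.cos_neg] at this
      simpa [abs_neg] using this
    have h3 : |t| ≤ (t - s) + |s| := by
      rcases abs_cases t with ⟨h, _⟩ | ⟨h, _⟩ <;> rcases abs_cases s with ⟨h', _⟩ | ⟨h', _⟩ <;>
        linarith
    have h4 := Real.neg_one_le_sin t
    have h5 := Real.sin_le_one s
    nlinarith [mul_le_mul_of_nonneg_left h3 hκ.le, mul_le_mul_of_nonneg_left h2 hκ.le,
      mul_le_mul_of_nonneg_left h1 hκ.le]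
  · intro t s hts
    rw [hΦ, abs_of_pos (Real.exp_pos _), ← Real.exp_add, ← Real.exp_add, Real.exp_le_exp]
    have h1 : t * Real.cos t ≤ |t| := mul_cos_le_abs t
    have h2 : -(s * Real.cos s) ≤ |s| := by
      have := mul_cos_le_abs (-s)
      simp [Real.cos_neg] at this
      simpa [abs_neg] using this
    have h3 : |s| ≤ (s - t) + |t| := by
      rcases abs_cases s with ⟨h, _⟩ | ⟨h, _⟩ <;> rcases abs_cases t with ⟨h', _⟩ | ⟨h', _⟩ <;>
        linarith
    have h4 := Real.neg_one_le_sin t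
    have h5 := Real.sin_le_one s
    nlinarith [mul_le_mul_of_nonneg_left h3 hκ.le, mul_le_mul_of_nonneg_left h2 hκ.le,
      mul_le_mul_of_nonneg_left h1 hκ.le]
end

section
/- The scalar systems u̇ = -10u and v̇ = -12v are nonuniformly (μ,2)-kinematically similar with respect to μ(t) = e^t via S(t) = e^{2t}: |S(t)| ≤ μ(t)^{2·sgn(t)}, |S(t)^{-1}| ≤ μ(t)^{2·sgn(t)}, and e^{-10(t-s)}e^{2s} = e^{2t}e^{-12(t-s)} for all t,s ∈ ℝ; yet their μ-dichotomy spectra differ: Σ_{NμD}(-10) = {-10} ≠ {-12} = Σ_{NμD}(-12). -/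
open Real Set Filter

noncomputable section

/-! The conjugacy `S(t) = e^{2t}` is a direct computation. For the spectra, view `e^{λ(t-s)}` as
the power evolution `(μ t / μ s)^λ` of an arbitrary growth rate `μ`: its `γ`-shift is
`(μ t / μ s)^(λ - γ)`, which for `γ ≠ λ` is a dichotomy with the trivial projector `1` or `0`,
and for `γ = λ` is the constant evolution `1`, which admits no dichotomy at all. -/

open Topology

section PowerEvolution

variable {μ : ℝ → ℝ}

theorem isInvProj_zero {M : Type*} [Ring M] (Φ : ℝ → ℝ → M) :
    IsInvProj Φ (fun _ => (0 : M)) :=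
  ⟨fun _ => mul_zero 0, fun t s => by rw [zero_mul, mul_zero]⟩

theorem isInvProj_one {M : Type*} [Ring M] (Φ : ℝ → ℝ → M) :
    IsInvProj Φ (fun _ => (1 : M)) :=
  ⟨fun _ => mul_one 1, fun t s => by rw [one_mul, mul_one]⟩

theorem shiftOp_rpow (hμ : ∀ t, 0 < μ t) (lam γ : ℝ) :
    shiftOp μ (fun t s => (μ t / μ s) ^ lam) γ = fun t s => (μ t / μ s) ^ (lam - γ) := by
  ext t s
  rw [shiftOp, smul_eq_mul, ← rpow_add (div_pos (hμ t) (hμ s)), neg_add_eq_sub]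

theorem isNmuD_rpow_of_neg (hμ : ∀ t, 0 < μ t) {c : ℝ} (hc : c < 0) :
    IsNmuD μ (fun t s => (μ t / μ s) ^ c) (fun _ => 1) 1 c 1 0 0 := by
  refine ⟨le_rfl, hc, one_pos, le_rfl, le_rfl, by linarith, by norm_num, ?_, ?_⟩
  · intro t s _
    rw [mul_one, norm_of_nonneg (rpow_nonneg (div_pos (hμ t) (hμ s)).le _)]
    simp
  · intro t s _
    rw [sub_self, mul_zero, norm_zero, one_mul, mul_zero, rpow_zero, mul_one]
    exact rpow_nonneg (div_pos (hμ t) (hμ s)).le _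

theorem isNmuD_rpow_of_pos (hμ : ∀ t, 0 < μ t) {c : ℝ} (hc : 0 < c) :
    IsNmuD μ (fun t s => (μ t / μ s) ^ c) (fun _ => 0) 1 (-1) c 0 0 := by
  refine ⟨le_rfl, by norm_num, hc, le_rfl, le_rfl, by norm_num, by linarith, ?_, ?_⟩
  · intro t s _
    rw [mul_zero, norm_zero, one_mul, mul_zero, rpow_zero, mul_one]
    exact rpow_nonneg (div_pos (hμ t) (hμ s)).le _
  · intro t s _
    rw [sub_zero, mul_one, norm_of_nonneg (rpow_nonneg (div_pos (hμ t) (hμ s)).le _)]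
    simp

/-- At `s = 0` the stable estimate forces `P 0 = 0` (let `t → ∞`) and the unstable one
forces `P 0 = 1` (let `t → -∞`). -/
theorem GrowthRate.not_isNmuD_one {M : Type*} [NormedRing M] [Nontrivial M] (hμ : GrowthRate μ)
    (P : ℝ → M) (K α β θ ν : ℝ) : ¬ IsNmuD μ (fun _ _ => (1 : M)) P K α β θ ν := by
  rintro ⟨-, hα, hβ, -, -, -, -, hst, hun⟩
  have hst0 : ∀ t, 0 ≤ t → ‖P 0‖ ≤ K * μ t ^ α := fun t ht => by
    simpa [hμ.one, sign_zero] using hst t 0 ht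
  have hun0 : ∀ t, t ≤ 0 → ‖1 - P 0‖ ≤ K * μ t ^ β := fun t ht => by
    simpa [hμ.one, sign_zero] using hun t 0 ht
  have hα_lim : Tendsto (fun t => K * μ t ^ α) atTop (𝓝 0) := by
    simpa using ((tendsto_rpow_neg_atTop (neg_pos.mpr hα)).comp hμ.top).const_mul K
  have hβ_lim : Tendsto (fun t => K * μ t ^ β) atBot (𝓝 0) := by
    simpa [zero_rpow hβ.ne'] using
      (((continuousAt_rpow_const 0 β (Or.inr hβ.le)).tendsto).comp hμ.bot).const_mul K
  have hP : P 0 = 0 := norm_le_zero_iff.mp <|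
    ge_of_tendsto hα_lim (eventually_atTop.mpr ⟨0, hst0⟩)
  have hP' : 1 - P 0 = 0 := norm_le_zero_iff.mp <|
    ge_of_tendsto hβ_lim (eventually_atBot.mpr ⟨0, hun0⟩)
  rw [hP, sub_zero] at hP'
  exact one_ne_zero hP'

theorem GrowthRate.compl_nmuResolvent_rpow (hμ : GrowthRate μ) (lam : ℝ) :
    (NmuResolvent μ (fun t s => (μ t / μ s) ^ lam))ᶜ = {lam} := by
  ext γ
  rw [mem_compl_iff, mem_singleton_iff, NmuResolvent, mem_ofPred_eq, shiftOp_rpow hμ.pos]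
  constructor
  · intro hγ
    by_contra hne
    rcases lt_or_gt_of_ne hne with hlt | hgt
    · exact hγ ⟨_, _, _, _, _, _, isInvProj_zero _, isNmuD_rpow_of_pos hμ.pos (sub_pos.mpr hlt)⟩
    · exact hγ ⟨_, _, _, _, _, _, isInvProj_one _, isNmuD_rpow_of_neg hμ.pos (sub_neg.mpr hgt)⟩
  · rintro rfl ⟨P, K, α, β, θ, ν, -, hP⟩
    simp only [sub_self, rpow_zero] at hP
    exact hμ.not_isNmuD_one P K α β θ ν hP

end PowerEvolution

theorem growthRate_exp : GrowthRate (fun t => Real.exp t) :=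
  ⟨exp_pos, exp_strictMono, exp_zero, tendsto_exp_atTop, tendsto_exp_atBot⟩

theorem exp_mul_sub_eq_rpow (lam : ℝ) :
    (fun t s : ℝ => exp (lam * (t - s))) = fun t s => (exp t / exp s) ^ lam := by
  ext t s
  rw [← exp_sub, ← exp_mul, mul_comm]

theorem exp_mul_le_rpow_sign {a ε : ℝ} (h : |a| ≤ ε) (t : ℝ) :
    exp (a * t) ≤ exp t ^ (sign t * ε) := by
  rw [← exp_mul, exp_le_exp]
  rcases lt_trichotomy t 0 with ht | rfl | ht
  · rw [sign_of_neg ht]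
    nlinarith [neg_abs_le a]
  · simp
  · rw [sign_of_pos ht]
    nlinarith [le_abs_self a]

/-- the systems `u̇ = -10u` and `v̇ = -12v` are nonuniformly
(μ, 2)-kinematically similar via `S(t) = e^{2t}`, yet their nonuniform
μ-dichotomy spectra differ. -/
theorem stmt15 :
    (∀ t : ℝ, |Real.exp (2 * t)| ≤ (Real.exp t) ^ (Real.sign t * 2)) ∧
    (∀ t : ℝ, |(Real.exp (2 * t))⁻¹| ≤ (Real.exp t) ^ (Real.sign t * 2)) ∧
    (∀ t s : ℝ, Real.exp (-10 * (t - s)) * Real.exp (2 * s)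
      = Real.exp (2 * t) * Real.exp (-12 * (t - s))) ∧
    KinSim (fun t => Real.exp t)
      (fun t s => Real.exp (-10 * (t - s))) (fun t s => Real.exp (-12 * (t - s)))
      (fun t => Real.exp (2 * t)) (fun t => (Real.exp (2 * t))⁻¹) 2 1 ∧
    (NmuResolvent (fun t => Real.exp t) (fun t s : ℝ => Real.exp (-10 * (t - s))))ᶜ
      = {(-10 : ℝ)} ∧
    (NmuResolvent (fun t => Real.exp t) (fun t s : ℝ => Real.exp (-12 * (t - s))))ᶜ
      = {(-12 : ℝ)} ∧
    ({(-10 : ℝ)} : Set ℝ) ≠ {(-12 : ℝ)} := by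
  have hS : ∀ t, |exp (2 * t)| ≤ exp t ^ (sign t * 2) := fun t => by
    rw [abs_of_pos (exp_pos _)]
    exact exp_mul_le_rpow_sign (by norm_num) t
  have hSinv : ∀ t, |(exp (2 * t))⁻¹| ≤ exp t ^ (sign t * 2) := fun t => by
    rw [← exp_neg, abs_of_pos (exp_pos _), ← neg_mul]
    exact exp_mul_le_rpow_sign (by norm_num) t
  have hconj : ∀ t s, exp (-10 * (t - s)) * exp (2 * s) = exp (2 * t) * exp (-12 * (t - s)) :=
    fun t s => by rw [← exp_add, ← exp_add]; ring_nf
  have hspec : ∀ lam : ℝ,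
      (NmuResolvent (fun t => exp t) (fun t s : ℝ => exp (lam * (t - s))))ᶜ = {lam} :=
    fun lam => by rw [exp_mul_sub_eq_rpow]; exact growthRate_exp.compl_nmuResolvent_rpow lam
  refine ⟨hS, hSinv, hconj, ⟨one_pos, fun t => mul_inv_cancel₀ (exp_ne_zero _),
    fun t => inv_mul_cancel₀ (exp_ne_zero _), fun t => by rw [norm_eq_abs, one_mul]; exact hS t,
    fun t => by rw [norm_eq_abs, one_mul]; exact hSinv t, hconj⟩, hspec (-10), hspec (-12),
    by norm_num⟩
end
end
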